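/- arXiv:2307.11745 — 4 statements merged into one kernel-verified Lean document; each statement's English description precedes it below -/
import Mathlib

section
/- There exists n₀ such that for all n ≥ n₀, setting N = 2^n and x = exp(√N), the number of natural numbers y with 0 ≤ y < x/N such that the interval [yN, (y+1)N) contains at least √N/2 prime numbers is strictly greater than x/(2·N·log x). -/
set_option maxHeartbeats 1000000

open Finset

lemma resid_count (a b r : ℕ) :
    ((Finset.Ico a b).filter (fun m => m % 6 = r)).card ≤ (b - a) / 6 + 2 := by
  have h : ((Finset.Ico a b).filter (fun m => m % 6 = r)).card ≤
      (Finset.Ico (a / 6) (a / 6 + ((b - a) / 6 + 2))).card := by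
    apply Finset.card_le_card_of_injOn (fun m => m / 6)
    · intro m hm
      simp only [Finset.coe_filter, Set.mem_setOf_eq, Finset.mem_filter, Finset.mem_Ico, Finset.coe_Ico, Set.mem_Ico, Finset.mem_coe] at hm ⊢
      omega
    · intro m1 h1 m2 h2 he
      simp only [Finset.coe_filter, Set.mem_setOf_eq, Finset.mem_Ico] at h1 h2
      dsimp only at he
      omega
  simpa using h

lemma interval_prime_count (a N' : ℕ) :
    ((Finset.Ico a (a + N')).filter Nat.Prime).card ≤ N' / 3 + 6 := by
  classical
  have hsub : (Finset.Ico a (a + N')).filter Nat.Prime ⊆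
      (((Finset.Ico a (a + N')).filter (fun m => m % 6 = 1)) ∪
      ((Finset.Ico a (a + N')).filter (fun m => m % 6 = 5))) ∪ {2, 3} := by
    intro p hp
    simp only [Finset.mem_filter, Finset.mem_union, Finset.mem_insert,
      Finset.mem_singleton] at hp ⊢
    obtain ⟨hmem, hprime⟩ := hp
    by_cases h2 : p = 2
    · tauto
    by_cases h3 : p = 3
    · tauto
    have hp2 : p % 2 ≠ 0 := by
      intro h
      rcases (hprime.eq_one_or_self_of_dvd 2 (Nat.dvd_of_mod_eq_zero h)) with h' | h' <;> omega
    have hp3 : p % 3 ≠ 0 := by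
      intro h
      rcases (hprime.eq_one_or_self_of_dvd 3 (Nat.dvd_of_mod_eq_zero h)) with h' | h' <;> omega
    have : p % 6 = 1 ∨ p % 6 = 5 := by omega
    tauto
  calc ((Finset.Ico a (a + N')).filter Nat.Prime).card
      ≤ _ := Finset.card_le_card hsub
    _ ≤ (((Finset.Ico a (a + N')).filter (fun m => m % 6 = 1)) ∪
      ((Finset.Ico a (a + N')).filter (fun m => m % 6 = 5))).card + ({2, 3} : Finset ℕ).card :=
      Finset.card_union_le _ _
    _ ≤ (((Finset.Ico a (a + N')).filter (fun m => m % 6 = 1)).card +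
      ((Finset.Ico a (a + N')).filter (fun m => m % 6 = 5)).card) + ({2, 3} : Finset ℕ).card := by
      gcongr; exact Finset.card_union_le _ _
    _ ≤ ((N' / 6 + 2) + (N' / 6 + 2)) + 2 := by
      gcongr <;> first
        | { have := resid_count a (a + N') 1; simpa using this }
        | { have := resid_count a (a + N') 5; simpa using this }
        | simp
    _ ≤ N' / 3 + 6 := by omega


lemma partition_sum (N' : ℕ) : ∀ M : ℕ,
    ∑ y ∈ Finset.range M, ((Finset.Ico (y * N') ((y + 1) * N')).filter Nat.Prime).card
      = ((Finset.range (M * N')).filter Nat.Prime).card := by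
  intro M
  induction M with
  | zero => simp
  | succ M ih =>
    rw [Finset.sum_range_succ, ih, Finset.range_eq_Ico]
    have h1 : (0:ℕ) ≤ M * N' := Nat.zero_le _
    have h2 : M * N' ≤ (M + 1) * N' := by nlinarith
    rw [Finset.range_eq_Ico, ← Finset.Ico_union_Ico_eq_Ico h1 h2, Finset.filter_union,
      Finset.card_union_of_disjoint]
    exact Finset.disjoint_filter_filter (Finset.Ico_disjoint_Ico_consecutive 0 (M * N') ((M+1)*N'))

lemma chebyshev_lower (m : ℕ) (hm : 4 ≤ m) :
    4 ^ m ≤ m * (2 * m) ^ (((Finset.range (2 * m)).filter Nat.Prime).card) := by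
  have h1 : (4:ℕ) ^ m ≤ m * Nat.centralBinom m := (Nat.four_pow_lt_mul_centralBinom m hm).le
  have h2 : Nat.centralBinom m ≤ (2 * m) ^ (((Finset.range (2 * m)).filter Nat.Prime).card) := by
    have hpos : 0 < 2 * m := by omega
    have hfac : (Nat.centralBinom m).primeFactors ⊆ (Finset.range (2 * m)).filter Nat.Prime := by
      intro p hp
      have hpp : p.Prime := Nat.prime_of_mem_primeFactors hp
      have hν : 1 ≤ (Nat.centralBinom m).factorization p :=
        (Nat.Prime.pow_dvd_iff_le_factorization hpp (Nat.centralBinom_ne_zero m)).mp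
          (by simpa using Nat.dvd_of_mem_primeFactors hp)
      have hle : p ≤ 2 * m := by
        calc p = p ^ 1 := (pow_one p).symm
          _ ≤ p ^ ((Nat.centralBinom m).factorization p) :=
            Nat.pow_le_pow_right hpp.one_lt.le hν
          _ ≤ 2 * m := Nat.pow_factorization_choose_le hpos
      have hne : p ≠ 2 * m := by
        rintro rfl
        have := (Nat.Prime.even_iff hpp).mp (even_two_mul m)
        omega
      simp only [Finset.mem_filter, Finset.mem_range]
      exact ⟨by omega, hpp⟩
    calc Nat.centralBinom m
        = ∏ p ∈ (Nat.centralBinom m).primeFactors, p ^ (Nat.centralBinom m).factorization p := by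
          conv_lhs => rw [← Nat.factorization_prod_pow_eq_self (Nat.centralBinom_ne_zero m)]
          rw [Finsupp.prod, Nat.support_factorization]
      _ ≤ ∏ p ∈ (Nat.centralBinom m).primeFactors, 2 * m := by
          apply Finset.prod_le_prod'
          intro p _
          exact Nat.pow_factorization_choose_le hpos
      _ = (2 * m) ^ (Nat.centralBinom m).primeFactors.card := by
          rw [Finset.prod_const]
      _ ≤ (2 * m) ^ (((Finset.range (2 * m)).filter Nat.Prime).card) :=
          Nat.pow_le_pow_right (by omega) (Finset.card_le_card hfac)
  calc (4:ℕ) ^ m ≤ m * Nat.centralBinom m := h1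
    _ ≤ m * (2 * m) ^ (((Finset.range (2 * m)).filter Nat.Prime).card) := by
        exact Nat.mul_le_mul_left m h2



/-- For `N = 2^n` and `x = exp(√N)`, the number of `y < x/N` such that the
interval `[yN, (y+1)N)` contains at least `√N/2` primes (a "rich" interval)
is strictly greater than `x/(2N log x)`, for all sufficiently large `n`. -/
theorem rich_intervals_lower_bound :
    ∃ n₀ : ℕ, ∀ n : ℕ, n₀ ≤ n →
      ∀ N x : ℝ, N = 2 ^ n → x = Real.exp (Real.sqrt N) →
        x / (2 * N * Real.log x) <
          ({y : ℕ | (y : ℝ) < x / N ∧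
              Real.sqrt N / 2 ≤
                ((Finset.Ico (y * 2 ^ n) ((y + 1) * 2 ^ n)).filter Nat.Prime).card} :
            Set ℕ).ncard := by
  use 20
  intro n hn N x hNdef hxdef
  set s : ℝ := Real.sqrt N with hsdef
  -- basic positivity
  have hN0 : (0:ℝ) < N := by rw [hNdef]; positivity
  have hNbig : (1048576:ℝ) ≤ N := by
    rw [hNdef]
    calc (1048576:ℝ) = 2 ^ 20 := by norm_num
      _ ≤ 2 ^ n := by apply pow_le_pow_right₀ (by norm_num) hn
  have hs0 : (0:ℝ) < s := Real.sqrt_pos.mpr hN0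
  have hss : s * s = N := Real.mul_self_sqrt hN0.le
  have hx0 : (0:ℝ) < x := by rw [hxdef]; exact Real.exp_pos s
  have hlogx : Real.log x = s := by rw [hxdef]; exact Real.log_exp s
  have hs1 : (1:ℝ) ≤ s := by nlinarith
  have hsN : s ≤ N := by nlinarith
  -- x ≥ 400 N
  have hx400 : 400 * N ≤ x := by
    have h1 : s/4 + 1 ≤ Real.exp (s/4) := Real.add_one_le_exp (s/4)
    have h2 : x = Real.exp (s/4) ^ (4:ℕ) := by
      rw [hxdef, ← Real.exp_nat_mul]
      congr 1
      push_cast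
      ring
    have h3 : (s/4 + 1)^(4:ℕ) ≤ Real.exp (s/4) ^ (4:ℕ) :=
      pow_le_pow_left₀ (by positivity) h1 4
    have h4 : (s/4)^(4:ℕ) ≤ (s/4 + 1)^(4:ℕ) :=
      pow_le_pow_left₀ (by positivity) (by linarith) 4
    have h5 : (s/4)^(4:ℕ) = N^2 / 256 := by
      rw [show (4:ℕ) = 2 * 2 from rfl, pow_mul, show (s/4)^2 = s*s/16 by ring, hss]; ring
    nlinarith [sq_nonneg N]
  -- the number of intervals
  set M : ℕ := ⌊x / N⌋₊ with hMdef
  have hxN0 : (0:ℝ) ≤ x / N := by positivity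
  have hM_le : (M:ℝ) ≤ x / N := Nat.floor_le hxN0
  have hM_lt : x / N < M + 1 := Nat.lt_floor_add_one _
  have hM1 : 1 ≤ M := by
    apply Nat.le_floor
    rw [Nat.cast_one, le_div_iff₀ hN0]
    linarith
  have hMN_le : (M:ℝ) * N ≤ x := (le_div_iff₀ hN0).mp hM_le
  have hMN_gt : x - N < (M:ℝ) * N := by
    have := (div_lt_iff₀ hN0).mp hM_lt
    nlinarith
  -- prime counts
  set c : ℕ → ℕ := fun y => ((Finset.Ico (y * 2 ^ n) ((y + 1) * 2 ^ n)).filter Nat.Prime).card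
    with hcdef
  set P : ℕ := ((Finset.range (M * 2 ^ n)).filter Nat.Prime).card with hPdef
  have hpart : ∑ y ∈ Finset.range M, c y = P := partition_sum (2^n) M
  have h2n : ((2^n : ℕ) : ℝ) = N := by rw [hNdef]; push_cast; rfl
  -- interval bound, real version
  set K : ℝ := N / 3 + 6 with hKdef
  have hK0 : (0:ℝ) < K := by positivity
  have hcK : ∀ y, (c y : ℝ) ≤ K := by
    intro y
    have h1 : c y ≤ 2^n / 3 + 6 := by
      have h := interval_prime_count (y * 2^n) (2^n)
      have he : (y+1) * 2^n = y * 2^n + 2^n := by ring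
      rw [hcdef]
      simp only []
      rw [he]
      exact h
    calc (c y : ℝ) ≤ ((2^n / 3 + 6 : ℕ) : ℝ) := by exact_mod_cast h1
      _ ≤ N / 3 + 6 := by
          push_cast
          have h := Nat.cast_div_le (α := ℝ) (m := 2^n) (n := 3)
          push_cast at h
          rw [hNdef]; push_cast; linarith
  -- rich count
  set Rc : ℕ := ((Finset.range M).filter (fun y => s / 2 ≤ (c y : ℝ))).card with hRcdef
  -- sum splitting
  have hsplit : (P:ℝ) ≤ (Rc:ℝ) * K + (M:ℝ) * (s/2) := by
    have h1 : (P:ℝ) = ∑ y ∈ Finset.range M, (c y : ℝ) := by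
      rw [← hpart]; push_cast; rfl
    have h2 : ∑ y ∈ (Finset.range M).filter (fun y => s / 2 ≤ (c y : ℝ)), (c y : ℝ)
        ≤ (Rc:ℝ) * K := by
      have h := Finset.sum_le_card_nsmul
        ((Finset.range M).filter (fun y => s / 2 ≤ (c y : ℝ))) (fun y => (c y : ℝ)) K
        (fun y _ => hcK y)
      rw [hRcdef]
      simpa [nsmul_eq_mul] using h
    have h3 : ∑ y ∈ (Finset.range M).filter (fun y => ¬ (s / 2 ≤ (c y : ℝ))), (c y : ℝ)
        ≤ (M:ℝ) * (s/2) := by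
      have hb : ∀ y ∈ (Finset.range M).filter (fun y => ¬ (s / 2 ≤ (c y : ℝ))),
          (c y : ℝ) ≤ s/2 := by
        intro y hy
        simp only [Finset.mem_filter] at hy
        linarith [lt_of_not_ge hy.2]
      have h := Finset.sum_le_card_nsmul _ _ _ hb
      have hcard : ((((Finset.range M).filter (fun y => ¬ (s / 2 ≤ (c y : ℝ)))).card : ℝ))
          ≤ (M:ℝ) := by
        have := Finset.card_filter_le (Finset.range M) (fun y => ¬ (s / 2 ≤ (c y : ℝ)))
        simp only [Finset.card_range] at this
        exact_mod_cast this
      simp only [nsmul_eq_mul] at h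
      nlinarith
    rw [h1, ← Finset.sum_filter_add_sum_filter_not (Finset.range M)
      (fun y => s / 2 ≤ (c y : ℝ)) (fun y => (c y : ℝ))]
    linarith
  -- Chebyshev lower bound on P
  have hn1 : n - 1 + 1 = n := by omega
  set m : ℕ := M * 2 ^ (n-1) with hmdef
  have h2m : 2 * m = M * 2 ^ n := by
    calc 2 * (M * 2^(n-1)) = M * (2^(n-1) * 2) := by ring
      _ = M * 2 ^ n := by rw [← pow_succ, hn1]
  have hm4 : 4 ≤ m := by
    have h4 : 4 ≤ 2 ^ (n-1) := by
      calc 4 = 2^2 := rfl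
        _ ≤ 2 ^ (n-1) := Nat.pow_le_pow_right (by norm_num) (by omega)
    calc 4 ≤ 1 * 2 ^ (n-1) := by omega
      _ ≤ M * 2 ^ (n-1) := Nat.mul_le_mul_right _ hM1
  have hm1 : (1:ℝ) ≤ (m:ℝ) := by exact_mod_cast Nat.one_le_iff_ne_zero.mpr (by omega)
  have hcheb : (4:ℝ)^m ≤ (m:ℝ) * ((M:ℝ)*N)^P := by
    have h := chebyshev_lower m hm4
    rw [h2m] at h
    have h' := (Nat.cast_le (α := ℝ)).mpr h
    push_cast at h'
    rw [hPdef, hNdef]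
    push_cast
    convert h' using 4
  -- log bounds
  have hMN0 : (0:ℝ) < (M:ℝ) * N := by
    have : (1:ℝ) ≤ (M:ℝ) := by exact_mod_cast hM1
    nlinarith
  have hlogMN : Real.log ((M:ℝ)*N) ≤ s := by
    rw [← hlogx]
    exact Real.log_le_log hMN0 hMN_le
  have hlogm : Real.log (m:ℝ) ≤ s := by
    rw [← hlogx]
    apply Real.log_le_log (by linarith)
    have hmle : (m:ℝ) ≤ (M:ℝ) * N := by
      have h1 : m ≤ 2 * m := by omega
      have h2 : ((2*m:ℕ):ℝ) = (M:ℝ) * N := by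
        rw [h2m, hNdef]; push_cast; ring
      calc (m:ℝ) ≤ ((2*m:ℕ):ℝ) := by exact_mod_cast h1
        _ = (M:ℝ) * N := h2
    linarith
  have hlog2 : (0.6931:ℝ) < Real.log 2 := by
    have := Real.log_two_gt_d9; linarith
  have hlog2' : Real.log 2 < 0.6932 := by
    have := Real.log_two_lt_d9; linarith
  -- π(X) lower bound: P * s ≥ (x - N) log 2 - s
  have hPs : (x - N) * Real.log 2 - s ≤ (P:ℝ) * s := by
    have hl := Real.log_le_log (by positivity) hcheb
    rw [Real.log_pow, Real.log_mul (by linarith) (by positivity), Real.log_pow] at hl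
    have hlog4 : Real.log 4 = 2 * Real.log 2 := by
      rw [show (4:ℝ) = 2^2 by norm_num, Real.log_pow]; push_cast; ring
    rw [hlog4] at hl
    have h2mr : (m:ℝ) * 2 = (M:ℝ) * N := by
      have h := congrArg (Nat.cast (R := ℝ)) h2m
      push_cast at h
      rw [hNdef]
      push_cast
      linarith
    have hP0 : (0:ℝ) ≤ (P:ℝ) := Nat.cast_nonneg P
    have hPlog : (P:ℝ) * Real.log ((M:ℝ)*N) ≤ (P:ℝ) * s :=
      mul_le_mul_of_nonneg_left hlogMN hP0
    nlinarith [hl, hlogm, hMN_gt, hlog2]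
  -- final numeric inequality
  have hfinal : (x / (2*N*s)) * K + (M:ℝ) * (s/2) < (P:ℝ) := by
    have hMs : (M:ℝ) * (s/2) ≤ x/N * (s/2) := by nlinarith
    have hnum : ((x / (2*N*s)) * K + (x/N) * (s/2)) * s < (x - N) * Real.log 2 - s := by
      have hexp : ((x / (2*N*s)) * K + (x/N) * (s/2)) * s = x/6 + 3*(x/N) + x/2 := by
        rw [hKdef, ← hss]
        field_simp
        ring
      rw [hexp]
      have hxdivN : x / N ≤ x / 1048576 := by
        apply div_le_div_of_nonneg_left hx0.le (by norm_num) hNbig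
      have hxl : 0.6931 * x ≤ x * Real.log 2 := by nlinarith
      have hNl : N * Real.log 2 ≤ 0.6932 * N := by nlinarith
      nlinarith
    have h1 : ((x / (2*N*s)) * K + (M:ℝ) * (s/2)) * s < (P:ℝ) * s := by
      calc ((x / (2*N*s)) * K + (M:ℝ) * (s/2)) * s
          ≤ ((x / (2*N*s)) * K + (x/N) * (s/2)) * s := by nlinarith
        _ < (x - N) * Real.log 2 - s := hnum
        _ ≤ (P:ℝ) * s := hPs
    exact lt_of_mul_lt_mul_right h1 hs0.le
  -- conclude: Rc > x/(2Ns)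
  have hRc : x / (2*N*s) < (Rc:ℝ) := by
    have h1 : (x / (2*N*s)) * K < (Rc:ℝ) * K := by linarith
    exact lt_of_mul_lt_mul_right h1 hK0.le
  -- relate to ncard
  set S : Set ℕ := {y : ℕ | (y : ℝ) < x / N ∧ s / 2 ≤ (c y : ℝ)} with hSdef
  have hSfin : S.Finite := by
    apply Set.Finite.subset (Set.finite_Icc 0 M)
    intro y hy
    rw [hSdef] at hy
    simp only [Set.mem_setOf_eq] at hy
    simp only [Set.mem_Icc]
    constructor
    · omega
    · have : (y:ℝ) < M + 1 := lt_trans hy.1 hM_lt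
      exact_mod_cast Nat.lt_add_one_iff.mp (by exact_mod_cast this)
  have hsub : ↑((Finset.range M).filter (fun y => s / 2 ≤ (c y : ℝ))) ⊆ S := by
    intro y hy
    simp only [Finset.coe_filter, Set.mem_setOf_eq, Finset.mem_range] at hy
    rw [hSdef]
    refine ⟨?_, hy.2⟩
    have h1 : (y:ℝ) < M := by exact_mod_cast hy.1
    linarith
  have hcard_le : Rc ≤ S.ncard := by
    rw [hRcdef, ← Set.ncard_coe_finset]
    exact Set.ncard_le_ncard hsub hSfin
  -- finish
  rw [hlogx]
  calc x / (2*N*s) < (Rc:ℝ) := hRc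
    _ ≤ (S.ncard : ℝ) := by exact_mod_cast hcard_le
end

section
/- For every natural number n ≥ 1 and every subset T of the set S = {a < 2^n : a is squarefree}, there exists a natural number y such that for all a < 2^n, the number y·2^n + a is squarefree if and only if a ∈ T. -/
open Finset

lemma crt_finset {β : Type} [DecidableEq β] (s : Finset β) (m r : β → ℕ)
    (hm : ∀ b ∈ s, ∀ c ∈ s, b ≠ c → Nat.Coprime (m b) (m c)) :
    ∃ w : ℕ, ∀ b ∈ s, w ≡ r b [MOD m b] := by
  classical
  induction s using Finset.induction with
  | empty => exact ⟨0, by simp⟩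
  | @insert a s ha ih =>
    obtain ⟨w, hw⟩ := ih (fun b hb c hc hbc =>
      hm b (mem_insert_of_mem hb) c (mem_insert_of_mem hc) hbc)
    have cop : Nat.Coprime (m a) (∏ b ∈ s, m b) :=
      Nat.Coprime.prod_right (fun b hb =>
        hm a (mem_insert_self a s) b (mem_insert_of_mem hb)
          (fun h => ha (h ▸ hb)))
    obtain ⟨k, hk1, hk2⟩ := Nat.chineseRemainder cop (r a) w
    refine ⟨k, fun b hb => ?_⟩
    rcases mem_insert.mp hb with rfl | hb
    · exact hk1
    · exact (hk2.of_dvd (dvd_prod_of_mem m hb)).trans (hw b hb)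

lemma tele_sum (z : ℕ) (hz : 1 ≤ z) (s : ℕ) :
    ∑ k ∈ Finset.Ioc z s, (1 : ℚ) / (k * (k - 1)) ≤ 1 / z := by
  rcases le_or_gt s z with h | h
  · rw [Finset.Ioc_eq_empty_of_le h, Finset.sum_empty]
    positivity
  · have key : ∀ t : ℕ, z ≤ t →
        ∑ k ∈ Finset.Ioc z t, (1 : ℚ) / (k * (k - 1)) ≤ 1 / z - 1 / t := by
      intro t ht
      induction t, ht using Nat.le_induction with
      | base => simp
      | succ t ht ih =>
        rw [sum_Ioc_succ_top ht]
        have h1 : (1:ℚ) ≤ (t:ℚ) := by exact_mod_cast hz.trans ht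
        have h2 : ((t:ℚ)+1) * ((t:ℚ)+1-1) ≠ 0 := by nlinarith
        have : (1:ℚ) / ((t+1 : ℕ) * ((t+1 : ℕ) - 1)) = 1/t - 1/(t+1) := by
          push_cast
          have ht0 : (t:ℚ) ≠ 0 := by linarith
          field_simp
          ring_nf
          exact mul_inv_cancel₀ ht0
        rw [this]
        push_cast
        linarith [ih]
    have hs : (0:ℚ) < s := by
      have : 0 < s := by omega
      exact_mod_cast this
    have h1s : (0:ℚ) ≤ 1 / s := by positivity
    linarith [key s h.le]

lemma card_progression (X A c q : ℕ) (hcop : Nat.Coprime q A) :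
    ((Finset.range X).filter (fun t => q ∣ A * t + c)).card ≤ X / q + 1 := by
  classical
  set Bad := (Finset.range X).filter (fun t => q ∣ A * t + c) with hBad
  rcases Bad.eq_empty_or_nonempty with h | h
  · simp [h]
  · set t0 := Bad.min' h with ht0
    have ht0mem : t0 ∈ Bad := Bad.min'_mem h
    have hkey : ∀ t ∈ Bad, q ∣ t - t0 := by
      intro t ht
      have hle : t0 ≤ t := Bad.min'_le t (by exact ht)
      have h1 : q ∣ A * t + c := (mem_filter.mp ht).2
      have h2 : q ∣ A * t0 + c := (mem_filter.mp ht0mem).2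
      have h3 : q ∣ A * (t - t0) := by
        have he : A * (t - t0) = (A * t + c) - (A * t0 + c) := by
          rw [Nat.mul_sub]
          omega
        rw [he]
        exact Nat.dvd_sub h1 h2
      exact (Nat.Coprime.dvd_of_dvd_mul_left hcop h3)
    have : Bad.card ≤ (Finset.range (X / q + 1)).card := by
      apply Finset.card_le_card_of_injOn (fun t => (t - t0) / q)
      · intro t ht
        have htX : t < X := mem_range.mp (mem_filter.mp ht).1
        have : (t - t0) / q ≤ X / q := Nat.div_le_div_right (by omega)
        exact mem_range.mpr (by dsimp only; omega)
      · intro t1 h1 t2 h2 heq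
        have d1 := hkey t1 h1
        have d2 := hkey t2 h2
        have l1 : t0 ≤ t1 := Bad.min'_le t1 h1
        have l2 : t0 ≤ t2 := Bad.min'_le t2 h2
        have e1 : (t1 - t0) / q * q = t1 - t0 := Nat.div_mul_cancel d1
        have e2 : (t2 - t0) / q * q = t2 - t0 := Nat.div_mul_cancel d2
        simp only at heq
        have : (t1 - t0) / q * q = (t2 - t0) / q * q := by rw [heq]
        omega
    simpa using this

lemma final_ineq (z X s : ℚ) (hz : 2 ≤ z) (hsX : z ^ 2 * s < X) (hs : 0 ≤ s) :
    (z - 1) * (X / z + s) < X := by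
  have hz0 : 0 < z := by linarith
  have hdiv : X / z * z = X := div_mul_cancel₀ _ (ne_of_gt hz0)
  have hu : z ^ 2 * s < X / z * z := by rw [hdiv]; exact hsX
  have h1 : z * s < X / z := by
    have := (mul_lt_mul_iff_left₀ hz0).mp (by nlinarith : (z * s) * z < (X / z) * z)
    exact this
  nlinarith [h1, hs, hz]

set_option maxHeartbeats 1000000 in
/-- For every `n ≥ 1` and every subset `T` of the squarefree numbers below
`2^n`, there is a natural number `y` such that, for `a < 2^n`, the number
`y·2^n + a` is squarefree if and only if `a ∈ T`. -/
theorem squarefree_profile_realizable :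
    ∀ n : ℕ, 1 ≤ n →
      ∀ T : Finset ℕ, T ⊆ (Finset.range (2 ^ n)).filter Squarefree →
        ∃ y : ℕ, ∀ a : ℕ, a < 2 ^ n → (Squarefree (y * 2 ^ n + a) ↔ a ∈ T) := by
  classical
  intro n hn T hT
  set z := 2 ^ n with hzdef
  have hz2 : 2 ≤ z := by
    calc 2 = 2 ^ 1 := by norm_num
    _ ≤ 2 ^ n := Nat.pow_le_pow_right (by norm_num) hn
  -- the set of "missing" squarefree numbers
  set B := ((Finset.range z).filter Squarefree) \ T with hBdef
  -- assigned primes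
  set pp : ℕ → ℕ := fun b => Nat.nth Nat.Prime (z + 1 + b) with hppdef
  have ppPrime : ∀ b, (pp b).Prime := fun b => Nat.prime_nth_prime _
  have ppBig : ∀ b, z < pp b := by
    intro b
    have h : z + 1 + b ≤ Nat.nth Nat.Prime (z + 1 + b) :=
      (Nat.nth_strictMono Nat.infinite_setOf_prime).le_apply
    simp only [hppdef]
    omega
  have ppInj : ∀ b c, pp b = pp c → b = c := by
    intro b c h
    have := (Nat.nth_strictMono Nat.infinite_setOf_prime).injective h
    omega
  -- product of squares of small primes
  set Q0 := ∏ p ∈ (z+1).primesBelow, p ^ 2 with hQ0def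
  have hQ0 : ∀ p : ℕ, p.Prime → p ≤ z → p ^ 2 ∣ Q0 := by
    intro p hp hpz
    exact dvd_prod_of_mem _ (Nat.mem_primesBelow.mpr ⟨by omega, hp⟩)
  -- coprimality of assigned primes with everything small
  have copQ : ∀ b, Nat.Coprime (Q0 * 2 ^ n) ((pp b) ^ 2) := by
    intro b
    apply Nat.Coprime.pow_right
    rw [Nat.coprime_comm]
    rw [Nat.Prime.coprime_iff_not_dvd (ppPrime b)]
    intro hdvd
    rcases (Nat.Prime.prime (ppPrime b)).dvd_mul.mp hdvd with h | h
    · obtain ⟨p, hpmem, hpd⟩ := (Nat.Prime.prime (ppPrime b)).exists_mem_finset_dvd h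
      obtain ⟨hplt, hpp⟩ := Nat.mem_primesBelow.mp hpmem
      have : pp b ∣ p := (Nat.Prime.prime (ppPrime b)).dvd_of_dvd_pow hpd
      have := Nat.le_of_dvd hpp.pos this
      have := ppBig b
      omega
    · have h2 : pp b ∣ 2 := (Nat.Prime.prime (ppPrime b)).dvd_of_dvd_pow h
      have := Nat.le_of_dvd (by norm_num) h2
      have := ppBig b
      omega
  -- solve the congruence for each missing element
  have sbex : ∀ b : ℕ, ∃ s : ℕ, (pp b) ^ 2 ∣ Q0 * 2 ^ n * s + b := by
    intro b
    have hP1 : 1 < (pp b) ^ 2 := by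
      have := (ppPrime b).two_le
      nlinarith
    haveI : NeZero ((pp b) ^ 2) := ⟨by omega⟩
    set P := (pp b) ^ 2 with hP
    refine ⟨((- (b : ZMod P)) * ((Q0 * 2 ^ n : ℕ) : ZMod P)⁻¹).val, ?_⟩
    rw [← ZMod.natCast_eq_zero_iff]
    push_cast
    rw [ZMod.natCast_val, ZMod.cast_id]
    have h1 : ((Q0 * 2 ^ n : ℕ) : ZMod P) * ((Q0 * 2 ^ n : ℕ) : ZMod P)⁻¹ = 1 :=
      ZMod.coe_mul_inv_eq_one _ (copQ b)
    push_cast at h1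
    calc (Q0 : ZMod P) * (2:ZMod P) ^ n * (-(b : ZMod P) * ((Q0:ZMod P) * (2:ZMod P) ^ n)⁻¹) + (b:ZMod P)
        = ((Q0:ZMod P) * (2:ZMod P) ^ n * ((Q0:ZMod P) * (2:ZMod P) ^ n)⁻¹) * (-(b:ZMod P)) + (b:ZMod P) := by ring
      _ = 0 := by rw [h1]; ring
  set sb : ℕ → ℕ := fun b => (sbex b).choose with hsbdef
  have hsb : ∀ b, (pp b) ^ 2 ∣ Q0 * 2 ^ n * sb b + b := fun b => (sbex b).choose_spec
  -- CRT
  obtain ⟨w, hw⟩ := crt_finset B (fun b => (pp b) ^ 2) sb (by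
    intro b _ c _ hbc
    exact ((Nat.coprime_primes (ppPrime b) (ppPrime c)).mpr
      (fun h => hbc (ppInj b c h))).pow 2 2)
  set Q1 := ∏ b ∈ B, (pp b) ^ 2 with hQ1def
  set Q := Q0 * Q1 with hQdef
  set r0 := Q0 * w with hr0def
  set y : ℕ → ℕ := fun t => Q * t + r0 with hydef
  -- fixed divisibility facts
  have F2 : ∀ t, Q0 ∣ y t := fun t => ⟨Q1 * t + w, by simp only [hydef, hQdef, hr0def]; ring⟩
  have F1 : ∀ b ∈ B, ∀ t, (pp b) ^ 2 ∣ y t * 2 ^ n + b := by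
    intro b hb t
    have hsplit : y t * 2 ^ n + b = (Q1 * (Q0 * t * 2 ^ n)) + (Q0 * 2 ^ n * w + b) := by
      simp only [hydef, hQdef, hr0def]; ring
    rw [hsplit]
    apply dvd_add
    · exact Dvd.dvd.mul_right (dvd_prod_of_mem _ hb) _
    · have hmod : Q0 * 2 ^ n * w + b ≡ Q0 * 2 ^ n * sb b + b [MOD (pp b) ^ 2] :=
        ((hw b hb).mul_left (Q0 * 2 ^ n)).add_right b
      have h0 : Q0 * 2 ^ n * sb b + b ≡ 0 [MOD (pp b) ^ 2] :=
        (Nat.modEq_zero_iff_dvd).mpr (hsb b)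
      exact (Nat.modEq_zero_iff_dvd).mp (hmod.trans h0)
  have Fdiff : ∀ a, a < z → a ∉ B → ∀ b ∈ B, ∀ t, ¬ ((pp b) ^ 2 ∣ y t * 2 ^ n + a) := by
    intro a haz haB b hb t hdvd
    have hbz : b < z := by
      have := (Finset.mem_sdiff.mp hb).1
      exact Finset.mem_range.mp (Finset.mem_filter.mp this).1
    have hne : a ≠ b := fun h => haB (h ▸ hb)
    have h1 := F1 b hb t
    have hpb := ppBig b
    have hple : pp b ≤ (pp b) ^ 2 := Nat.le_self_pow (by norm_num) _
    rcases le_total a b with hab | hab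
    · have hd : (pp b) ^ 2 ∣ b - a := by
        have := Nat.dvd_sub h1 hdvd
        have he : (y t * 2 ^ n + b) - (y t * 2 ^ n + a) = b - a := by omega
        rwa [he] at this
      have := Nat.le_of_dvd (by omega) hd
      omega
    · have hd : (pp b) ^ 2 ∣ a - b := by
        have := Nat.dvd_sub hdvd h1
        have he : (y t * 2 ^ n + a) - (y t * 2 ^ n + b) = a - b := by omega
        rwa [he] at this
      have := Nat.le_of_dvd (by omega) hd
      omega
  -- counting setup
  have hQ0pos : 0 < Q0 :=
    Finset.prod_pos (fun p hp => pow_pos (Nat.mem_primesBelow.mp hp).2.pos 2)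
  set H := (Q + r0 + 1) * 2 ^ n with hHdef
  set X := z ^ 4 * H + 1 with hXdef
  set M := H * X with hMdef
  set sM := Nat.sqrt M with hsMdef
  have hXpos : 0 < X := by omega
  have hNle : ∀ t, t < X → ∀ a, a < z → y t * 2 ^ n + a ≤ M := by
    intro t ht a ha
    have h1 : Q * t + r0 + 1 ≤ (Q + r0 + 1) * X := by
      have ht1 : t + 1 ≤ X := ht
      calc Q * t + r0 + 1 ≤ Q * t + Q + r0 + 1 := by omega
        _ = Q * (t+1) + (r0 + 1) * 1 := by ring
        _ ≤ Q * X + (r0 + 1) * X := by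
            exact Nat.add_le_add (Nat.mul_le_mul_left _ ht1)
              (Nat.mul_le_mul_left _ hXpos)
        _ = (Q + r0 + 1) * X := by ring
    calc y t * 2 ^ n + a = (Q * t + r0) * 2 ^ n + a := rfl
      _ ≤ (Q * t + r0) * 2 ^ n + 2 ^ n := by omega
      _ = (Q * t + r0 + 1) * 2 ^ n := by ring
      _ ≤ ((Q + r0 + 1) * X) * 2 ^ n := Nat.mul_le_mul_right _ h1
      _ = M := by rw [hMdef, hHdef]; ring
  have hzX : z ^ 2 * sM < X := by
    have hs2 : sM ^ 2 ≤ M := Nat.sqrt_le' M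
    have hXm : X - 1 = z ^ 4 * H := by omega
    have h4 : (z ^ 2 * sM) ^ 2 ≤ (X - 1) * X := by
      calc (z ^ 2 * sM) ^ 2 = z ^ 4 * sM ^ 2 := by ring
        _ ≤ z ^ 4 * M := Nat.mul_le_mul_left _ hs2
        _ = (z ^ 4 * H) * X := by rw [hMdef]; ring
        _ = (X - 1) * X := by rw [hXm]
    by_contra hcon
    push_neg at hcon
    have h5 : X ^ 2 ≤ (z ^ 2 * sM) ^ 2 := Nat.pow_le_pow_left hcon 2
    have h6 : (X - 1) * X < X * X := Nat.mul_lt_mul_of_lt_of_le (by omega) le_rfl (by omega)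
    have : X ^ 2 = X * X := by ring
    omega
  set PP := (Finset.Ioc z sM).filter (fun p => Nat.Prime p) with hPPdef
  set badset := (Finset.range X).filter
    (fun t => ∃ a ∈ T, ∃ p ∈ PP, p ^ 2 ∣ y t * 2 ^ n + a) with hbaddef
  have cardT : T.card + 1 ≤ z := by
    have hsub : T ⊆ (Finset.range z).erase 0 := by
      intro a haT
      have h := hT haT
      rw [Finset.mem_filter, Finset.mem_range] at h
      refine Finset.mem_erase.mpr ⟨?_, Finset.mem_range.mpr h.1⟩
      intro h0
      exact not_squarefree_zero (h0 ▸ h.2)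
    have := Finset.card_le_card hsub
    rw [Finset.card_erase_of_mem (Finset.mem_range.mpr (by omega)), Finset.card_range] at this
    omega
  have hpairbound : ∀ a ∈ T, ∀ p ∈ PP,
      ((Finset.range X).filter (fun t => p ^ 2 ∣ y t * 2 ^ n + a)).card ≤ X / p ^ 2 + 1 := by
    intro a haT p hpPP
    obtain ⟨hpIoc, hpPrime⟩ := Finset.mem_filter.mp hpPP
    obtain ⟨hpz, hps⟩ := Finset.mem_Ioc.mp hpIoc
    by_cases hb : ∃ b ∈ B, p = pp b
    · obtain ⟨b, hbB, rfl⟩ := hb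
      have haz : a < z := Finset.mem_range.mp (Finset.mem_filter.mp (hT haT)).1
      have haB : a ∉ B := fun h => (Finset.mem_sdiff.mp h).2 haT
      have hemp : (Finset.range X).filter (fun t => (pp b) ^ 2 ∣ y t * 2 ^ n + a) = ∅ := by
        rw [Finset.filter_eq_empty_iff]
        intro t _
        exact Fdiff a haz haB b hbB t
      rw [hemp]
      simp
    · push_neg at hb
      have hcop : Nat.Coprime (p ^ 2) (Q * 2 ^ n) := by
        apply Nat.Coprime.pow_left
        rw [Nat.Prime.coprime_iff_not_dvd hpPrime]
        intro hd
        rcases hpPrime.prime.dvd_mul.mp hd with h | h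
        · rcases hpPrime.prime.dvd_mul.mp h with h0 | h1
          · obtain ⟨r, hrmem, hrd⟩ := hpPrime.prime.exists_mem_finset_dvd h0
            obtain ⟨hrlt, hrp⟩ := Nat.mem_primesBelow.mp hrmem
            have : p ∣ r := hpPrime.prime.dvd_of_dvd_pow hrd
            have := Nat.le_of_dvd hrp.pos this
            omega
          · obtain ⟨b, hbmem, hbd⟩ := hpPrime.prime.exists_mem_finset_dvd h1
            have hdd : p ∣ pp b := hpPrime.prime.dvd_of_dvd_pow hbd
            have : p = pp b := (Nat.prime_dvd_prime_iff_eq hpPrime (ppPrime b)).mp hdd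
            exact hb b hbmem this
        · have h2 : p ∣ 2 := hpPrime.prime.dvd_of_dvd_pow h
          have := Nat.le_of_dvd (by norm_num) h2
          omega
      have heq : (Finset.range X).filter (fun t => p ^ 2 ∣ y t * 2 ^ n + a)
          = (Finset.range X).filter (fun t => p ^ 2 ∣ (Q * 2 ^ n) * t + (r0 * 2 ^ n + a)) := by
        apply Finset.filter_congr
        intro t _
        have he : y t * 2 ^ n + a = (Q * 2 ^ n) * t + (r0 * 2 ^ n + a) := by
          simp only [hydef]; ring
        rw [he]
      rw [heq]
      exact card_progression X (Q * 2 ^ n) (r0 * 2 ^ n + a) (p ^ 2) hcop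
  -- rational counting
  have hbadcard : badset.card < X := by
    have hsub : badset ⊆ T.biUnion (fun a => PP.biUnion
        (fun p => (Finset.range X).filter (fun t => p ^ 2 ∣ y t * 2 ^ n + a))) := by
      intro t ht
      obtain ⟨htX, a, haT, p, hpPP, hdvd⟩ := Finset.mem_filter.mp ht
      exact Finset.mem_biUnion.mpr ⟨a, haT, Finset.mem_biUnion.mpr
        ⟨p, hpPP, Finset.mem_filter.mpr ⟨htX, hdvd⟩⟩⟩
    have h1 : badset.card ≤ ∑ a ∈ T, ∑ p ∈ PP,
        ((Finset.range X).filter (fun t => p ^ 2 ∣ y t * 2 ^ n + a)).card :=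
      (Finset.card_le_card hsub).trans (Finset.card_biUnion_le.trans
        (Finset.sum_le_sum fun a _ => Finset.card_biUnion_le))
    have h2 : ∀ a ∈ T, ∀ p ∈ PP,
        (((Finset.range X).filter (fun t => p ^ 2 ∣ y t * 2 ^ n + a)).card : ℚ)
          ≤ (X : ℚ) / (p * (p - 1)) + 1 := by
      intro a ha p hp
      obtain ⟨hpIoc, hpPrime⟩ := Finset.mem_filter.mp hp
      obtain ⟨hpz, hps⟩ := Finset.mem_Ioc.mp hpIoc
      have hpq : (3 : ℚ) ≤ (p : ℚ) := by exact_mod_cast (by omega : 3 ≤ p)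
      have c1 : (((Finset.range X).filter (fun t => p ^ 2 ∣ y t * 2 ^ n + a)).card : ℚ)
          ≤ ((X / p ^ 2 : ℕ) : ℚ) + 1 := by exact_mod_cast hpairbound a ha p hp
      have c2 : ((X / p ^ 2 : ℕ) : ℚ) ≤ (X : ℚ) / ((p : ℚ) ^ 2) := by
        have h := Nat.cast_div_le (α := ℚ) (m := X) (n := p ^ 2)
        rwa [Nat.cast_pow] at h
      have c3 : (X : ℚ) / ((p : ℚ) ^ 2) ≤ (X : ℚ) / (p * (p - 1)) := by
        apply div_le_div_of_nonneg_left (Nat.cast_nonneg X) (by nlinarith) (by nlinarith)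
      linarith
    have h4 : ∀ a ∈ T, ∑ p ∈ PP, ((X : ℚ) / (p * (p - 1)) + 1) ≤ (X : ℚ) / z + sM := by
      intro a _
      rw [Finset.sum_add_distrib, Finset.sum_const, nsmul_eq_mul, mul_one]
      have hA : ∑ p ∈ PP, (X : ℚ) / (p * (p - 1))
          ≤ ∑ k ∈ Finset.Ioc z sM, (X : ℚ) / (k * (k - 1)) := by
        apply Finset.sum_le_sum_of_subset_of_nonneg (Finset.filter_subset _ _)
        intro k hk _
        have hk3 : 3 ≤ k := by
          have := (Finset.mem_Ioc.mp hk).1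
          omega
        have hkq : (3 : ℚ) ≤ (k : ℚ) := by exact_mod_cast hk3
        apply div_nonneg (Nat.cast_nonneg X)
        nlinarith
      have hB : ∑ k ∈ Finset.Ioc z sM, (X : ℚ) / (k * (k - 1))
          = (X : ℚ) * ∑ k ∈ Finset.Ioc z sM, 1 / ((k : ℚ) * (k - 1)) := by
        rw [Finset.mul_sum]
        apply Finset.sum_congr rfl
        intro k _
        ring
      have hC := tele_sum z (by omega) sM
      have hD : (PP.card : ℚ) ≤ (sM : ℚ) := by
        have : PP.card ≤ (Finset.Ioc z sM).card := Finset.card_filter_le _ _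
        rw [Nat.card_Ioc] at this
        exact_mod_cast this.trans (Nat.sub_le sM z)
      have hXnn : (0 : ℚ) ≤ (X : ℚ) := Nat.cast_nonneg X
      have : (X : ℚ) * ∑ k ∈ Finset.Ioc z sM, 1 / ((k : ℚ) * (k - 1)) ≤ (X : ℚ) * (1 / z) :=
        mul_le_mul_of_nonneg_left hC hXnn
      calc ∑ p ∈ PP, (X : ℚ) / (p * (p - 1)) + (PP.card : ℚ)
          ≤ (X : ℚ) * ∑ k ∈ Finset.Ioc z sM, 1 / ((k : ℚ) * (k - 1)) + (sM : ℚ) := by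
            rw [← hB]; exact add_le_add hA hD
        _ ≤ (X : ℚ) * (1 / z) + (sM : ℚ) := by linarith
        _ = (X : ℚ) / z + (sM : ℚ) := by ring
    have h5 : (badset.card : ℚ) ≤ (T.card : ℚ) * ((X : ℚ) / z + sM) := by
      calc (badset.card : ℚ)
          ≤ ∑ a ∈ T, ∑ p ∈ PP, (((Finset.range X).filter
              (fun t => p ^ 2 ∣ y t * 2 ^ n + a)).card : ℚ) := by exact_mod_cast h1
        _ ≤ ∑ a ∈ T, ((X : ℚ) / z + sM) := Finset.sum_le_sum (fun a ha =>
            (Finset.sum_le_sum (fun p hp => h2 a ha p hp)).trans (h4 a ha))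
        _ = (T.card : ℚ) * ((X : ℚ) / z + sM) := by
            rw [Finset.sum_const, nsmul_eq_mul]
    have hzq : (2 : ℚ) ≤ (z : ℚ) := by exact_mod_cast hz2
    have hzpos : (0 : ℚ) < (z : ℚ) := by linarith
    have hsXq : (z : ℚ) ^ 2 * (sM : ℚ) < (X : ℚ) := by exact_mod_cast hzX
    have hsnn : (0 : ℚ) ≤ (sM : ℚ) := Nat.cast_nonneg sM
    have hdiv : (X : ℚ) / z * z = X := div_mul_cancel₀ _ (ne_of_gt hzpos)
    have hTz : (T.card : ℚ) ≤ (z : ℚ) - 1 := by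
      have : (T.card : ℚ) + 1 ≤ (z : ℚ) := by exact_mod_cast cardT
      linarith
    have hnn : (0 : ℚ) ≤ (X : ℚ) / z + sM := by positivity
    have h6 : (T.card : ℚ) * ((X : ℚ) / z + sM) ≤ ((z : ℚ) - 1) * ((X : ℚ) / z + sM) :=
      mul_le_mul_of_nonneg_right hTz hnn
    have h7 : ((z : ℚ) - 1) * ((X : ℚ) / z + sM) < X :=
      final_ineq _ _ _ hzq hsXq hsnn
    have : (badset.card : ℚ) < (X : ℚ) := by linarith
    exact_mod_cast this
  obtain ⟨t, htX, htgood⟩ : ∃ t, t ∈ Finset.range X ∧ t ∉ badset := by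
    by_contra hc
    push_neg at hc
    have hsub : Finset.range X ⊆ badset := fun t ht => hc t ht
    have := Finset.card_le_card hsub
    rw [Finset.card_range] at this
    omega
  -- the chosen y works
  refine ⟨y t, fun a ha => ?_⟩
  constructor
  · intro hsf
    by_contra haT
    by_cases hasf : Squarefree a
    · have haB : a ∈ B := Finset.mem_sdiff.mpr
        ⟨Finset.mem_filter.mpr ⟨Finset.mem_range.mpr ha, hasf⟩, haT⟩
      have hdvd := F1 a haB t
      rw [pow_two] at hdvd
      exact (ppPrime a).not_isUnit (hsf (pp a) hdvd)
    · rcases eq_or_ne a 0 with rfl | ha0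
      · have h4 : (2 : ℕ) ^ 2 ∣ Q0 := hQ0 2 Nat.prime_two (by omega)
        have hdvd : 2 * 2 ∣ y t * 2 ^ n + 0 := by
          rw [add_zero, ← pow_two]
          exact ((h4.trans (F2 t)).mul_right _)
        exact Nat.prime_two.not_isUnit (hsf 2 hdvd)
      · rw [Nat.squarefree_iff_prime_squarefree] at hasf
        push_neg at hasf
        obtain ⟨q, hq, hqd⟩ := hasf
        have hqa : q * q ≤ a := Nat.le_of_dvd (by omega) hqd
        have hq2 := hq.two_le
        have hqz : q ≤ z := by nlinarith
        have h1 : q ^ 2 ∣ y t := (hQ0 q hq hqz).trans (F2 t)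
        have hdvd : q * q ∣ y t * 2 ^ n + a := by
          rw [← pow_two] at hqd ⊢
          exact dvd_add (h1.mul_right _) hqd
        exact hq.not_isUnit (hsf q hdvd)
  · intro haT
    rw [Nat.squarefree_iff_prime_squarefree]
    intro q hq hqd
    rw [← pow_two] at hqd
    have hasf : Squarefree a := (Finset.mem_filter.mp (hT haT)).2
    have ha0 : a ≠ 0 := by
      intro h
      exact not_squarefree_zero (h ▸ hasf)
    rcases le_or_gt q z with hqz | hqz
    · have h1 : q ^ 2 ∣ y t * 2 ^ n := ((hQ0 q hq hqz).trans (F2 t)).mul_right _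
      have h2 : q * q ∣ a := by
        have hd := Nat.dvd_sub hqd h1
        have he : (y t * 2 ^ n + a) - y t * 2 ^ n = a := by omega
        rw [he, pow_two] at hd
        exact hd
      exact hq.not_isUnit (hasf q h2)
    · by_cases hqb : ∃ b ∈ B, q = pp b
      · obtain ⟨b, hbB, rfl⟩ := hqb
        have haB : a ∉ B := fun h => (Finset.mem_sdiff.mp h).2 haT
        exact Fdiff a ha haB b hbB t hqd
      · push_neg at hqb
        have hN0 : 0 < y t * 2 ^ n + a := by omega
        have hNM : y t * 2 ^ n + a ≤ M := hNle t (Finset.mem_range.mp htX) a ha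
        have hqq : q * q ≤ M := by
          have := Nat.le_of_dvd hN0 hqd
          rw [pow_two] at this
          omega
        have hqs : q ≤ sM := Nat.le_sqrt.mpr hqq
        have hqPP : q ∈ PP := Finset.mem_filter.mpr ⟨Finset.mem_Ioc.mpr ⟨hqz, hqs⟩, hq⟩
        exact htgood (Finset.mem_filter.mpr ⟨htX, a, haT, q, hqPP, hqd⟩)
end

section
/- For every ε > 0 there exists n₀ such that for all n ≥ n₀, the number of distinct subsets of {0, 1, …, 2^n − 1} of the form {a < 2^n : y·2^n + a is squarefree} as y ranges over all natural numbers is at least 2^{(6/π² − ε)·2^n}. -/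
set_option maxHeartbeats 1000000

open Finset ArithmeticFunction

lemma SQF.hasSum_moebius :
    HasSum (fun d : ℕ => ((moebius d : ℤ) : ℝ) / (d : ℝ) ^ 2) (6 / Real.pi ^ 2) := by
  have hs : (1 : ℝ) < (2 : ℂ).re := by norm_num
  have hsum : LSeriesSummable (fun n => ((moebius n : ℤ) : ℂ)) 2 :=
    ArithmeticFunction.LSeriesSummable_moebius_iff.mpr hs
  have h1 := ArithmeticFunction.LSeries_zeta_mul_Lseries_moebius hs
  rw [ArithmeticFunction.LSeries_zeta_eq_riemannZeta hs, riemannZeta_two] at h1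
  have hπ : ((Real.pi : ℂ)) ^ 2 ≠ 0 := by
    simpa using Complex.ofReal_ne_zero.mpr Real.pi_ne_zero
  have hval : LSeries (fun n => ((moebius n : ℤ) : ℂ)) 2 = 6 / (Real.pi : ℂ) ^ 2 := by
    field_simp at h1 ⊢
    linear_combination h1
  have hHS : HasSum (fun n => LSeries.term (fun n => ((moebius n : ℤ) : ℂ)) 2 n)
      (6 / (Real.pi : ℂ) ^ 2) := hval ▸ hsum.hasSum
  rw [← Complex.hasSum_ofReal (α := ℕ)]
  have hfun : (fun n : ℕ => ((((moebius n : ℤ) : ℝ) / (n : ℝ) ^ 2 : ℝ) : ℂ))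
      = fun n => LSeries.term (fun n => ((moebius n : ℤ) : ℂ)) 2 n := by
    funext n
    rw [LSeries.term_def]
    rcases eq_or_ne n 0 with rfl | hn
    · simp
    · rw [if_neg hn, show (2 : ℂ) = ((2 : ℕ) : ℂ) by norm_num, Complex.cpow_natCast]
      push_cast
      ring

  have hv : ((6 / Real.pi ^ 2 : ℝ) : ℂ) = 6 / (Real.pi : ℂ) ^ 2 := by push_cast; ring
  rw [hfun, hv]
  exact hHS

lemma SQF.dvd_of_sq_dvd {d b s : ℕ} (hs : Squarefree s) (hd : d ≠ 0) (hb : b ≠ 0)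
    (h : d * d ∣ b ^ 2 * s) : d ∣ b := by
  have hs0 : s ≠ 0 := hs.ne_zero
  have hdd : d * d ≠ 0 := mul_ne_zero hd hd
  have hbs : b ^ 2 * s ≠ 0 := mul_ne_zero (pow_ne_zero _ hb) hs0
  rw [← Nat.factorization_le_iff_dvd hd hb]
  have hle := (Nat.factorization_le_iff_dvd hdd hbs).mpr h
  rw [Finsupp.le_def] at hle ⊢
  intro p
  have h1 := hle p
  rw [Nat.factorization_mul hd hd, Nat.factorization_mul (pow_ne_zero _ hb) hs0,
    Nat.factorization_pow] at h1
  have h2 := hs.natFactorization_le_one p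
  simp only [Finsupp.add_apply, Finsupp.smul_apply, smul_eq_mul] at h1
  omega

lemma SQF.indicator_eq {N a : ℕ} (ha : 0 < a) (haN : a < N) :
    (∑ d ∈ range N, if d * d ∣ a then moebius d else 0)
      = if Squarefree a then (1 : ℤ) else 0 := by
  obtain ⟨s, b, hbs, hs⟩ := Nat.sq_mul_squarefree a
  have hb : b ≠ 0 := by rintro rfl; simp at hbs; omega
  have hs0 : s ≠ 0 := hs.ne_zero
  have hfil : (range N).filter (fun d => d * d ∣ a) = b.divisors := by
    ext d
    simp only [mem_filter, mem_range, Nat.mem_divisors]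
    constructor
    · rintro ⟨-, hdvd⟩
      have hd : d ≠ 0 := by
        rintro rfl
        rw [zero_mul, zero_dvd_iff] at hdvd; omega
      exact ⟨SQF.dvd_of_sq_dvd hs hd hb (hbs ▸ hdvd), hb⟩
    · rintro ⟨hdvd, -⟩
      have hbN : b < N := by
        have h1 : b ≤ b ^ 2 * s := by
          calc b ≤ b ^ 2 := by nlinarith [Nat.one_le_iff_ne_zero.mpr hb]
          _ ≤ b ^ 2 * s := Nat.le_mul_of_pos_right _ (Nat.pos_of_ne_zero hs0)
        omega
      exact ⟨lt_of_le_of_lt (Nat.le_of_dvd (Nat.pos_of_ne_zero hb) hdvd) hbN,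
        (mul_dvd_mul hdvd hdvd).trans ⟨s, by rw [← hbs]; ring⟩⟩
  rw [← Finset.sum_filter, hfil]
  have hsum : ∑ d ∈ b.divisors, moebius d = if b = 1 then 1 else 0 := by
    have := ArithmeticFunction.coe_mul_zeta_apply (f := moebius) (x := b)
    rw [ArithmeticFunction.moebius_mul_coe_zeta] at this
    rw [← this, ArithmeticFunction.one_apply]
  rw [hsum]
  congr 1
  · rw [eq_iff_iff]
    constructor
    · rintro rfl; simpa using hbs ▸ (by simpa using hs : Squarefree (1^2*s))
    · intro hsq
      have : b * b ∣ a := ⟨s, by rw [← hbs]; ring⟩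
      have := hsq b this
      rwa [Nat.isUnit_iff] at this

lemma SQF.cast_div_lb (a b : ℕ) (hb : 0 < b) : (a : ℝ) / b - 1 < ((a / b : ℕ) : ℝ) := by
  have h1 : a < b * (a / b) + b := by
    have := Nat.div_add_mod a b
    have := Nat.mod_lt a hb
    omega
  have h2 : (a : ℝ) < b * ((a / b : ℕ) : ℝ) + b := by exact_mod_cast h1
  have hb' : (0 : ℝ) < b := by exact_mod_cast hb
  rw [div_sub_one hb'.ne', div_lt_iff₀ hb']
  nlinarith

lemma SQF.count_identity (N : ℕ) (hN : 1 ≤ N) :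
    ((((range N).filter Squarefree).card : ℤ))
      = ∑ d ∈ range N, moebius d * (((N - 1) / (d * d) : ℕ) : ℤ) := by
  have h0 : (range N).filter Squarefree = (Ico 1 N).filter Squarefree := by
    ext a
    simp only [mem_filter, mem_range, mem_Ico]
    constructor
    · rintro ⟨h1, h2⟩
      exact ⟨⟨Nat.pos_of_ne_zero h2.ne_zero, h1⟩, h2⟩
    · rintro ⟨h1, h2⟩; exact ⟨h1.2, h2⟩
  calc ((((range N).filter Squarefree).card : ℤ))
      = ∑ a ∈ Ico 1 N, (if Squarefree a then (1 : ℤ) else 0) := by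
        rw [h0, Finset.card_filter]
        push_cast
        exact Finset.sum_congr rfl fun a _ => by split_ifs <;> simp
    _ = ∑ a ∈ Ico 1 N, ∑ d ∈ range N, (if d * d ∣ a then moebius d else 0) := by
        refine Finset.sum_congr rfl fun a ha => ?_
        rw [mem_Ico] at ha
        exact (SQF.indicator_eq ha.1 ha.2).symm
    _ = ∑ d ∈ range N, ∑ a ∈ Ico 1 N, (if d * d ∣ a then moebius d else 0) :=
        Finset.sum_comm
    _ = ∑ d ∈ range N, moebius d * (((N - 1) / (d * d) : ℕ) : ℤ) := by
        refine Finset.sum_congr rfl fun d _ => ?_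
        rw [← Finset.sum_filter, Finset.sum_const, nsmul_eq_mul, mul_comm]
        congr 1
        have hIco : Ico 1 N = Ioc 0 (N - 1) := by ext x; simp [mem_Ico, mem_Ioc]; omega
        rw [hIco]
        exact_mod_cast Nat.Ioc_filter_dvd_card_eq_div (N-1) (d*d)

lemma SQF.sqf_count (ε : ℝ) (hε : 0 < ε) : ∃ N₀ : ℕ, ∀ N : ℕ, N₀ ≤ N → 1 ≤ N →
    (6 / Real.pi ^ 2 - ε) * N ≤ (((range N).filter Squarefree).card : ℝ) := by
  set c : ℝ := 6 / Real.pi ^ 2 with hc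
  set δ : ℝ := ε / 2 with hδ
  have hδ0 : 0 < δ := by positivity
  -- partial sums eventually close
  have htend := SQF.hasSum_moebius.tendsto_sum_nat
  have hev : ∀ᶠ N in Filter.atTop,
      c - δ < ∑ d ∈ range N, ((moebius d : ℤ) : ℝ) / (d : ℝ) ^ 2 :=
    htend.eventually (eventually_gt_nhds (by linarith))
  obtain ⟨D₀, hD₀⟩ := Filter.eventually_atTop.mp hev
  obtain ⟨N₂, hN₂⟩ := exists_nat_gt ((6 / δ) ^ 2)
  refine ⟨max D₀ (N₂ + 1), fun N hge h1N => ?_⟩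
  have hND : D₀ ≤ N := le_trans (le_max_left _ _) hge
  have hNN₂ : ((6 / δ) ^ 2) < N := lt_of_lt_of_le hN₂ (by exact_mod_cast le_trans (by omega) hge)
  set S : ℝ := ∑ d ∈ range N, ((moebius d : ℤ) : ℝ) / (d : ℝ) ^ 2 with hS
  have hSlb : c - δ < S := hD₀ N hND
  -- |S| ≤ 2
  have hSub : |S| ≤ 2 := by
    have h1 : |S| ≤ ∑ d ∈ range N, |((moebius d : ℤ) : ℝ) / (d : ℝ) ^ 2| :=
      Finset.abs_sum_le_sum_abs _ _
    have h2 : ∀ d ∈ range N, |((moebius d : ℤ) : ℝ) / (d : ℝ) ^ 2|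
        ≤ (if d = 0 then 0 else (((d : ℝ) ^ 2)⁻¹)) := by
      intro d _
      rcases eq_or_ne d 0 with rfl | hd
      · simp
      · rw [if_neg hd, abs_div, abs_of_nonneg (by positivity : (0:ℝ) ≤ (d:ℝ)^2),
          div_eq_mul_inv]
        have : |((moebius d : ℤ) : ℝ)| ≤ 1 := by
          exact_mod_cast (ArithmeticFunction.abs_moebius_le_one (n := d))
        nlinarith [inv_nonneg.mpr (by positivity : (0:ℝ) ≤ (d:ℝ)^2)]
    have h3 : ∑ d ∈ range N, (if d = 0 then (0:ℝ) else (((d : ℝ) ^ 2)⁻¹))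
        = ∑ d ∈ Ioo 0 N, ((d : ℝ) ^ 2)⁻¹ := by
      rw [show Ioo 0 N = (range N).filter (fun d => ¬ d = 0) by
        ext x; simp [mem_Ioo, mem_filter, mem_range]; omega, Finset.sum_filter]
      exact Finset.sum_congr rfl fun d _ => by split_ifs <;> simp_all
    have h4 : ∑ d ∈ Ioo 0 N, ((d : ℝ) ^ 2)⁻¹ ≤ 2 / (0 + 1) := by
      simpa using sum_Ioo_inv_sq_le (α := ℝ) 0 N
    calc |S| ≤ _ := h1
      _ ≤ _ := Finset.sum_le_sum h2
      _ ≤ 2 := by rw [h3]; linarith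
  -- main identity, cast to ℝ
  have hQZ := SQF.count_identity N h1N
  have hQ : ((((range N).filter Squarefree).card : ℝ))
      = ∑ d ∈ range N, ((moebius d : ℤ) : ℝ) * (((N - 1) / (d * d) : ℕ) : ℝ) := by
    have h := congrArg (fun z : ℤ => (z : ℝ)) hQZ
    push_cast at h
    exact h
  set s : ℕ := Nat.sqrt (N - 1) with hsdef
  set M : ℝ := (((N - 1 : ℕ)) : ℝ) with hM
  have hM0 : 0 ≤ M := by positivity
  -- error bound termwise
  have hterm : ∀ d ∈ range N,
      ((moebius d : ℤ) : ℝ) * (M / (d : ℝ) ^ 2) - (if d = 0 then 0 else if d ≤ s then (1:ℝ)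
        else M / (d : ℝ) ^ 2)
      ≤ ((moebius d : ℤ) : ℝ) * (((N - 1) / (d * d) : ℕ) : ℝ) := by
    intro d _
    have habsμ : |((moebius d : ℤ) : ℝ)| ≤ 1 := by
      exact_mod_cast (ArithmeticFunction.abs_moebius_le_one (n := d))
    rcases eq_or_ne d 0 with rfl | hd
    · simp
    · have hd1 : 1 ≤ d := Nat.pos_of_ne_zero hd
      have hd0R : (0:ℝ) < (d:ℝ) ^ 2 := by positivity
      rw [if_neg hd]
      by_cases hds : d ≤ s
      · -- |cast div - M/d²| ≤ 1
        rw [if_pos hds]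
        have hub : (((N - 1) / (d * d) : ℕ) : ℝ) ≤ M / (d : ℝ) ^ 2 := by
          have h := Nat.cast_div_le (α := ℝ) (m := N - 1) (n := d * d)
          push_cast at h
          rw [hM, pow_two]
          exact h
        have hlb : M / (d : ℝ) ^ 2 - 1 < (((N - 1) / (d * d) : ℕ) : ℝ) := by
          have h := SQF.cast_div_lb (N - 1) (d * d) (by positivity)
          push_cast at h
          rw [hM, pow_two]
          linarith
        obtain ⟨hx1, hx2⟩ := abs_le.mp habsμ
        have hkey : (0:ℝ) ≤ (1 - ((moebius d : ℤ) : ℝ)) * (M / (d : ℝ) ^ 2 - (((N - 1) / (d * d) : ℕ) : ℝ)) :=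
          mul_nonneg (by linarith) (by linarith)
        nlinarith [hkey]
      · -- large d : floor is 0
        rw [if_neg hds]
        have hz : (N - 1) / (d * d) = 0 := by
          apply Nat.div_eq_of_lt
          have hsd : s + 1 ≤ d := by omega
          calc N - 1 < (s + 1) * (s + 1) := Nat.lt_succ_sqrt (N-1)
            _ ≤ d * d := Nat.mul_le_mul hsd hsd
        rw [hz]
        obtain ⟨hx1, hx2⟩ := abs_le.mp habsμ
        have h0 : (0:ℝ) ≤ M / (d:ℝ)^2 := by positivity
        have hkey : (0:ℝ) ≤ (1 - ((moebius d : ℤ) : ℝ)) * (M / (d : ℝ) ^ 2) :=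
          mul_nonneg (by linarith) h0
        push_cast
        nlinarith [hkey]
  have hsum1 : ∑ d ∈ range N, ((moebius d : ℤ) : ℝ) * (M / (d : ℝ) ^ 2) = M * S := by
    rw [hS, Finset.mul_sum]
    refine Finset.sum_congr rfl fun d _ => by ring
  -- error total
  have hE : ∑ d ∈ range N, (if d = 0 then 0 else if d ≤ s then (1:ℝ) else M / (d : ℝ) ^ 2)
      ≤ s + M * (2 / (s + 1)) := by
    have hpt : ∀ d ∈ range N, (if d = 0 then 0 else if d ≤ s then (1:ℝ) else M / (d : ℝ) ^ 2)
        ≤ (if d ∈ Icc 1 s then (1:ℝ) else 0) + (if d ∈ Ioo s N then M * ((d:ℝ)^2)⁻¹ else 0) := by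
      intro d hd
      rw [mem_range] at hd
      rcases eq_or_ne d 0 with rfl | h0
      · simp
      · rw [if_neg h0]
        by_cases hds : d ≤ s
        · rw [if_pos hds, if_pos (by simp [mem_Icc]; omega), if_neg (by simp [mem_Ioo]; omega)]
          norm_num
        · rw [if_neg hds, if_neg (by simp [mem_Icc]; omega), if_pos (by simp [mem_Ioo]; omega)]
          rw [div_eq_mul_inv]; norm_num
    calc _ ≤ _ := Finset.sum_le_sum hpt
      _ = (∑ d ∈ range N, (if d ∈ Icc 1 s then (1:ℝ) else 0))
          + ∑ d ∈ range N, (if d ∈ Ioo s N then M * ((d:ℝ)^2)⁻¹ else 0) := Finset.sum_add_distrib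
      _ ≤ s + M * (2 / (s + 1)) := by
        gcongr
        · rw [Finset.sum_ite_mem, Finset.sum_const, nsmul_eq_mul, mul_one]
          have : ((range N) ∩ Icc 1 s).card ≤ (Icc 1 s).card :=
            Finset.card_le_card (Finset.inter_subset_right)
          rw [Nat.card_Icc] at this
          exact_mod_cast le_trans (Nat.cast_le.mpr this) (by simp)
        · rw [Finset.sum_ite_mem]
          have hsub : (range N) ∩ Ioo s N = Ioo s N := by
            apply Finset.inter_eq_right.mpr
            intro x hx; rw [mem_Ioo] at hx; exact mem_range.mpr hx.2
          rw [hsub, ← Finset.mul_sum]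
          exact mul_le_mul_of_nonneg_left (sum_Ioo_inv_sq_le s N) hM0
  -- combine
  have hQlb : M * S - (s + M * (2 / (s + 1))) ≤ (((range N).filter Squarefree).card : ℝ) := by
    rw [hQ, ← hsum1]
    have := Finset.sum_le_sum hterm
    rw [Finset.sum_sub_distrib] at this
    linarith [hE]
  -- numeric finish
  have hsqrtN : (0:ℝ) < Real.sqrt N := Real.sqrt_pos.mpr (by exact_mod_cast h1N)
  have hs_le : (s : ℝ) ≤ Real.sqrt N := by
    rw [Real.le_sqrt (by positivity) (by positivity)]
    have h2 : s * s ≤ N := le_trans (Nat.sqrt_le (N - 1)) (by omega)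
    calc ((s:ℝ)) ^ 2 = ((s * s : ℕ) : ℝ) := by push_cast; ring
      _ ≤ N := by exact_mod_cast h2
  have hMdiv : M * (2 / (s + 1)) ≤ 2 * Real.sqrt N + 2 := by
    have h1 : M < ((s:ℝ) + 1) * ((s:ℝ) + 1) := by
      have := Nat.lt_succ_sqrt (N - 1)
      rw [hM]; exact_mod_cast by exact_mod_cast Nat.cast_lt.mpr this
    have hsp : (0:ℝ) < (s:ℝ) + 1 := by positivity
    rw [div_eq_mul_inv, ← mul_assoc]
    have hMle : M / ((s:ℝ)+1) ≤ (s:ℝ) + 1 := by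
      rw [div_le_iff₀ hsp]; nlinarith
    have h2 : M * ((s:ℝ)+1)⁻¹ ≤ (s:ℝ) + 1 := by rwa [← div_eq_mul_inv]
    have h3 : (s:ℝ) + 1 ≤ Real.sqrt N + 1 := by linarith
    calc M * 2 * ((s:ℝ)+1)⁻¹ = 2 * (M * ((s:ℝ)+1)⁻¹) := by ring
      _ ≤ 2 * ((s:ℝ)+1) := by linarith
      _ ≤ 2 * (Real.sqrt N + 1) := by linarith
      _ ≤ 2 * Real.sqrt N + 2 := by linarith
  -- final numeric assembly
  have hMN : M = (N : ℝ) - 1 := by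
    rw [hM]
    have : ((N - 1 : ℕ) : ℝ) = (N : ℝ) - 1 := by
      push_cast [h1N]; ring
    exact this
  have hc1 : c ≤ 1 := by
    rw [hc, div_le_one (by positivity)]
    nlinarith [Real.pi_gt_three]
  have hMS : (N : ℝ) * (c - δ) - 1 ≤ M * S := by
    have h1 : M * (c - δ) ≤ M * S := mul_le_mul_of_nonneg_left (le_of_lt hSlb) hM0
    rw [hMN] at h1 ⊢
    nlinarith [hδ0]
  have hone_le : (1:ℝ) ≤ Real.sqrt N := by
    rw [show (1:ℝ) = Real.sqrt 1 by simp]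
    exact Real.sqrt_le_sqrt (by exact_mod_cast h1N)
  have hsqrt_gt : 6 / δ < Real.sqrt N := by
    rw [show Real.sqrt (N:ℝ) = Real.sqrt (N:ℝ) from rfl]
    have : (6/δ)^2 < (N:ℝ) := hNN₂
    nlinarith [Real.sq_sqrt (show (0:ℝ) ≤ (N:ℝ) by positivity),
      Real.sqrt_nonneg (N:ℝ), sq_nonneg (Real.sqrt (N:ℝ) - 6/δ), div_pos (by norm_num : (0:ℝ) < 6) hδ0]
  have hfin : 6 * Real.sqrt N ≤ δ * N := by
    have h2 : Real.sqrt N * Real.sqrt N = N := Real.mul_self_sqrt (by positivity)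
    have h3 : 6 < δ * Real.sqrt N := by
      rw [div_lt_iff₀ hδ0] at hsqrt_gt
      linarith [mul_comm δ (Real.sqrt N) ▸ hsqrt_gt]
    nlinarith [hone_le]
  have hgoal : (c - ε) * N = (c - δ) * N - δ * N := by rw [hδ]; ring
  linarith [hQlb, hs_le, hMdiv, hMS, hone_le, hfin]

lemma SQF.exists_primes (C : Finset ℕ) (H : ℕ) : ∃ f : ℕ → ℕ,
    (∀ a ∈ C, (f a).Prime ∧ H < f a) ∧ Set.InjOn f C := by
  classical
  induction C using Finset.induction_on with
  | empty => exact ⟨fun _ => 0, by simp, by simp [Set.InjOn]⟩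
  | @insert a C ha ih =>
    obtain ⟨f, hf, hinj⟩ := ih
    obtain ⟨p, hple, hp⟩ := Nat.exists_infinite_primes ((max H (C.sup f)) + 1)
    refine ⟨Function.update f a p, ?_, ?_⟩
    · intro b hb
      rcases Finset.mem_insert.mp hb with rfl | hbC
      · simp only [Function.update_self]
        exact ⟨hp, lt_of_lt_of_le (lt_of_le_of_lt (le_max_left H _) (Nat.lt_succ_self _)) hple⟩
      · rw [Function.update_of_ne (by rintro rfl; exact ha hbC)]
        exact hf b hbC
    · intro x hx y hy hxy
      simp only [Finset.coe_insert, Set.mem_insert_iff] at hx hy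
      have hkey : ∀ b ∈ C, f b < p := by
        intro b hb
        exact lt_of_le_of_lt (Finset.le_sup hb) (by omega)
      rcases hx with rfl | hx <;> rcases hy with rfl | hy
      · rfl
      · rw [Function.update_self, Function.update_of_ne (by rintro rfl; exact ha hy)] at hxy
        exact absurd hxy.symm (ne_of_lt (hkey y hy))
      · rw [Function.update_self, Function.update_of_ne (by rintro rfl; exact ha hx)] at hxy
        exact absurd hxy (ne_of_lt (hkey x hx))
      · rw [Function.update_of_ne (by rintro rfl; exact ha hx),
          Function.update_of_ne (by rintro rfl; exact ha hy)] at hxy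
        exact hinj hx hy hxy

lemma SQF.card_le_of_pairwise_modeq {s : Finset ℕ} {Y L : ℕ} (hL : 0 < L)
    (hs : ∀ x ∈ s, x < Y) (h : ∀ x ∈ s, ∀ y ∈ s, x % L = y % L) :
    s.card ≤ Y / L + 1 := by
  have : s.card ≤ (range (Y / L + 1)).card := by
    apply Finset.card_le_card_of_injOn (fun x => x / L)
    · intro x hx
      simp only [Finset.mem_coe, mem_range]
      have : x / L ≤ Y / L := Nat.div_le_div_right (le_of_lt (hs x hx))
      omega
    · intro x hx y hy hxy
      have h1 := h x hx y hy
      have h2 := Nat.div_add_mod x L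
      have h3 := Nat.div_add_mod y L
      simp only at hxy
      rw [hxy] at h2
      omega
  simpa using this

lemma SQF.card_ge_ap (Y M r : ℕ) (hM : 0 < M) :
    Y / M ≤ ((range Y).filter (fun y => y % M = r % M)).card := by
  have : (range (Y / M)).card ≤ ((range Y).filter (fun y => y % M = r % M)).card := by
    apply Finset.card_le_card_of_injOn (fun k => r % M + k * M)
    · intro k hk
      simp only [Finset.mem_coe, mem_range] at hk
      simp only [Finset.mem_coe, mem_filter, mem_range]
      refine ⟨?_, ?_⟩
      · have h1 : (k + 1) * M ≤ (Y / M) * M := Nat.mul_le_mul_right _ (by omega)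
        have h2 : (Y / M) * M ≤ Y := Nat.div_mul_le_self Y M
        have h3 : r % M < M := Nat.mod_lt _ hM
        nlinarith
      · rw [Nat.add_mul_mod_self_right, Nat.mod_mod_of_dvd _ dvd_rfl]
    · intro x _ y _ hxy
      simp only at hxy
      have : x * M = y * M := by omega
      exact Nat.eq_of_mul_eq_mul_right hM this
  simpa using this

lemma SQF.exists_avoid (N M r H : ℕ) (hM : 0 < M) (hN : 0 < N) (hH : H = 4 * N)
    (B : Finset ℕ) (hB : ∀ a ∈ B, 0 < a ∧ a < N)
    (hHN : ∀ q : ℕ, q.Prime → H < q → ¬ q ∣ N) :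
    ∃ y : ℕ, y % M = r % M ∧
      ∀ a ∈ B, ∀ q : ℕ, q.Prime → H < q → ¬ q ∣ M → ¬ (q * q ∣ y * N + a) := by
  classical
  set W : ℕ := 4 * M * N * N + 4 with hW
  set Y : ℕ := M * (W * W) with hYdef
  set K : ℕ := Nat.sqrt (Y * N) with hK
  set T : Finset ℕ := (range Y).filter (fun y => y % M = r % M) with hT
  set Bad : Finset ℕ := T.filter (fun y => ∃ a ∈ B, ∃ q : ℕ,
      q.Prime ∧ H < q ∧ ¬ q ∣ M ∧ q * q ∣ y * N + a) with hBad
  set Qs : Finset ℕ := (Ioo H (K+1)).filter (fun q => q.Prime ∧ ¬ q ∣ M) with hQs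
  -- covering
  have hcov : Bad ⊆ B.biUnion (fun a => Qs.biUnion (fun q =>
      T.filter (fun y => q * q ∣ y * N + a))) := by
    intro y hy
    rw [hBad, mem_filter] at hy
    obtain ⟨a, haB, q, hq, hHq, hqM, hdvd⟩ := hy.2
    rw [Finset.mem_biUnion]
    refine ⟨a, haB, ?_⟩
    rw [Finset.mem_biUnion]
    have hyY : y < Y := mem_range.mp (mem_filter.mp hy.1).1
    have haN := hB a haB
    have hpos : 0 < y * N + a := by omega
    have hle : q * q ≤ Y * N := by
      have h1 : q * q ≤ y * N + a := Nat.le_of_dvd hpos hdvd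
      have h2 : (y + 1) * N ≤ Y * N := Nat.mul_le_mul_right _ (by omega)
      nlinarith
    have hqK : q ≤ K := by rw [hK]; exact Nat.le_sqrt.mpr hle
    refine ⟨q, ?_, ?_⟩
    · rw [hQs, mem_filter, mem_Ioo]
      exact ⟨⟨hHq, by omega⟩, hq, hqM⟩
    · rw [mem_filter]
      exact ⟨hy.1, hdvd⟩
  -- per-event cardinality
  have hev : ∀ a ∈ B, ∀ q ∈ Qs,
      (T.filter (fun y => q * q ∣ y * N + a)).card ≤ Y / (M * (q * q)) + 1 := by
    intro a haB q hqQ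
    rw [hQs, mem_filter, mem_Ioo] at hqQ
    obtain ⟨⟨hHq, hqK⟩, hq, hqM⟩ := hqQ
    have hqN : ¬ q ∣ N := hHN q hq hHq
    have hcq : Nat.Coprime q N := (Nat.Prime.coprime_iff_not_dvd hq).mpr hqN
    have hcopN : Nat.Coprime (q * q) N := Nat.Coprime.mul hcq hcq
    have hcqM : Nat.Coprime q M := (Nat.Prime.coprime_iff_not_dvd hq).mpr hqM
    have hcopM : Nat.Coprime M (q * q) := (Nat.Coprime.mul hcqM hcqM).symm
    apply SQF.card_le_of_pairwise_modeq (by have := hq.pos; positivity)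
    · intro x hx
      exact mem_range.mp (mem_filter.mp (mem_filter.mp hx).1).1
    · intro x hx z hz
      rw [mem_filter] at hx hz
      have hxT := mem_filter.mp hx.1
      have hzT := mem_filter.mp hz.1
      have hmodM : x ≡ z [MOD M] := hxT.2.trans hzT.2.symm
      have key : ∀ u v : ℕ, u ≤ v → q * q ∣ u * N + a → q * q ∣ v * N + a →
          u ≡ v [MOD q * q] := by
        intro u v huv hu hv
        have hd : q * q ∣ (v - u) * N := by
          have h2 := Nat.dvd_sub hv hu
          rwa [show v * N + a - (u * N + a) = (v - u) * N by
            rw [Nat.sub_mul]; omega] at h2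
        have h3 : q * q ∣ v - u := hcopN.dvd_of_dvd_mul_right hd
        exact (Nat.modEq_iff_dvd' huv).mpr h3
      have hmodq : x ≡ z [MOD q * q] := by
        rcases le_total x z with hle | hle
        · exact key x z hle hx.2 hz.2
        · exact (key z x hle hz.2 hx.2).symm
      exact (Nat.modEq_and_modEq_iff_modEq_mul hcopM).mp ⟨hmodM, hmodq⟩
  -- cardinality of Bad, real bound
  have hBadNat : Bad.card ≤ ∑ a ∈ B, ∑ q ∈ Qs, (Y / (M * (q * q)) + 1) := by
    calc Bad.card ≤ _ := Finset.card_le_card hcov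
      _ ≤ ∑ a ∈ B, (Qs.biUnion (fun q => T.filter (fun y => q * q ∣ y * N + a))).card :=
          Finset.card_biUnion_le
      _ ≤ ∑ a ∈ B, ∑ q ∈ Qs, (T.filter (fun y => q * q ∣ y * N + a)).card :=
          Finset.sum_le_sum fun a _ => Finset.card_biUnion_le
      _ ≤ ∑ a ∈ B, ∑ q ∈ Qs, (Y / (M * (q * q)) + 1) :=
          Finset.sum_le_sum fun a ha => Finset.sum_le_sum fun q hq => hev a ha q hq
  have hcardB : B.card ≤ N := by
    have : B ⊆ range N := fun a ha => mem_range.mpr (hB a ha).2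
    simpa using Finset.card_le_card this
  have hcardQs : (Qs.card : ℝ) ≤ K := by
    have h1 : Qs ⊆ Ioo H (K+1) := Finset.filter_subset _ _
    have h2 := Finset.card_le_card h1
    rw [Nat.card_Ioo] at h2
    have : Qs.card ≤ K := by omega
    exact_mod_cast this
  -- real arithmetic
  have hMR : (1:ℝ) ≤ (M:ℝ) := by exact_mod_cast hM
  have hNR : (1:ℝ) ≤ (N:ℝ) := by exact_mod_cast hN
  have hWR : (W:ℝ) = 4*(M:ℝ)*(N:ℝ)*(N:ℝ) + 4 := by rw [hW]; push_cast; ring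
  have hWpos : (0:ℝ) < (W:ℝ) := by rw [hWR]; positivity
  have hYR : (Y:ℝ) = (M:ℝ) * ((W:ℝ) * (W:ℝ)) := by rw [hYdef]; push_cast; ring
  have hKR : (K:ℝ) ≤ (M:ℝ) * (N:ℝ) * (W:ℝ) := by
    have h1 : (K:ℝ) * (K:ℝ) ≤ (Y:ℝ) * (N:ℝ) := by
      have := Nat.sqrt_le (Y * N)
      rw [hK]
      exact_mod_cast this
    have h1' : (K:ℝ) * (K:ℝ) ≤ (M:ℝ) * ((W:ℝ)*(W:ℝ)) * (N:ℝ) := by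
      rw [← hYR]; exact h1
    have e2 : (M:ℝ) * ((W:ℝ)*(W:ℝ)) * (N:ℝ) ≤ ((M:ℝ)*(N:ℝ)*(W:ℝ)) * ((M:ℝ)*(N:ℝ)*(W:ℝ)) := by
      have hmn1 : (0:ℝ) ≤ (M:ℝ)*(N:ℝ) - 1 := by nlinarith [hMR, hNR]
      have hfac : (0:ℝ) ≤ ((M:ℝ)*(N:ℝ)*((W:ℝ)*(W:ℝ))) * ((M:ℝ)*(N:ℝ) - 1) :=
        mul_nonneg (by positivity) hmn1
      nlinarith [hfac]
    have hKnn : (0:ℝ) ≤ (K:ℝ) := by positivity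
    have hBnn : (0:ℝ) ≤ (M:ℝ)*(N:ℝ)*(W:ℝ) := by positivity
    nlinarith [h1', e2, hKnn, hBnn]
  have hsum_real : (Bad.card : ℝ) < (W:ℝ) * (W:ℝ) := by
    have hstep : (Bad.card : ℝ) ≤ (N:ℝ) * (((Y:ℝ)/(M:ℝ)) * (2 / ((H:ℝ)+1)) + (K:ℝ)) := by
      have hc1 : (Bad.card : ℝ) ≤ ∑ a ∈ B, ∑ q ∈ Qs, ((Y:ℝ) / ((M:ℝ) * ((q:ℝ) * (q:ℝ))) + 1) := by
        calc (Bad.card : ℝ) ≤ ((∑ a ∈ B, ∑ q ∈ Qs, (Y / (M * (q * q)) + 1) : ℕ) : ℝ) := by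
              exact_mod_cast hBadNat
          _ ≤ _ := by
              push_cast
              refine Finset.sum_le_sum fun a _ => Finset.sum_le_sum fun q _ => ?_
              have hcast := Nat.cast_div_le (α := ℝ) (m := Y) (n := M * (q * q))
              have h5 : ((Y / (M * (q * q)) : ℕ) : ℝ) ≤ (Y:ℝ) / ((M:ℝ) * ((q:ℝ) * (q:ℝ))) := by
                rw [show ((M * (q * q) : ℕ) : ℝ) = (M:ℝ) * ((q:ℝ) * (q:ℝ)) by push_cast; ring] at hcast
                exact hcast
              linarith
      have hc2 : ∀ a ∈ B, ∑ q ∈ Qs, ((Y:ℝ) / ((M:ℝ) * ((q:ℝ) * (q:ℝ))) + 1)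
          ≤ ((Y:ℝ)/(M:ℝ)) * (2 / ((H:ℝ)+1)) + (K:ℝ) := by
        intro a _
        rw [Finset.sum_add_distrib]
        gcongr ?_ + ?_
        · have hsub : ∑ q ∈ Qs, (Y:ℝ) / ((M:ℝ) * ((q:ℝ) * (q:ℝ)))
              ≤ ∑ q ∈ Ioo H (K+1), (Y:ℝ) / ((M:ℝ) * ((q:ℝ) * (q:ℝ))) := by
            apply Finset.sum_le_sum_of_subset_of_nonneg (Finset.filter_subset _ _)
            intro q _ _
            positivity
          have heq : ∑ q ∈ Ioo H (K+1), (Y:ℝ) / ((M:ℝ) * ((q:ℝ) * (q:ℝ)))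
              = ((Y:ℝ)/(M:ℝ)) * ∑ q ∈ Ioo H (K+1), (((q:ℝ))^2)⁻¹ := by
            rw [Finset.mul_sum]
            refine Finset.sum_congr rfl fun q _ => ?_
            rw [pow_two]
            field_simp
          have htail := sum_Ioo_inv_sq_le (α := ℝ) H (K+1)
          have hYMpos : (0:ℝ) ≤ (Y:ℝ)/(M:ℝ) := by positivity
          calc ∑ q ∈ Qs, (Y:ℝ) / ((M:ℝ) * ((q:ℝ) * (q:ℝ))) ≤ _ := hsub
            _ = _ := heq
            _ ≤ ((Y:ℝ)/(M:ℝ)) * (2 / ((H:ℝ)+1)) := by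
                exact mul_le_mul_of_nonneg_left htail hYMpos
        · simpa using hcardQs
      calc (Bad.card : ℝ) ≤ _ := hc1
        _ ≤ ∑ a ∈ B, (((Y:ℝ)/(M:ℝ)) * (2 / ((H:ℝ)+1)) + (K:ℝ)) := Finset.sum_le_sum hc2
        _ = (B.card : ℝ) * (((Y:ℝ)/(M:ℝ)) * (2 / ((H:ℝ)+1)) + (K:ℝ)) := by
            rw [Finset.sum_const, nsmul_eq_mul]
        _ ≤ (N:ℝ) * (((Y:ℝ)/(M:ℝ)) * (2 / ((H:ℝ)+1)) + (K:ℝ)) := by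
            have h1 : (B.card : ℝ) ≤ (N:ℝ) := by exact_mod_cast hcardB
            have h2 : (0:ℝ) ≤ ((Y:ℝ)/(M:ℝ)) * (2 / ((H:ℝ)+1)) + (K:ℝ) := by positivity
            nlinarith
    -- numeric estimate
    have hHR : (H:ℝ) = 4*(N:ℝ) := by rw [hH]; push_cast; ring
    have hYM : (Y:ℝ)/(M:ℝ) = (W:ℝ)*(W:ℝ) := by
      rw [hYR]; field_simp
    rw [hYM, hHR] at hstep
    have h1 : (W:ℝ)*(W:ℝ) * (2/((4*(N:ℝ))+1)) ≤ (W:ℝ)*(W:ℝ) / (2*(N:ℝ)) := by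
      have e1 : 2/((4*(N:ℝ))+1) ≤ 1/(2*(N:ℝ)) := by
        rw [div_le_div_iff₀ (by linarith) (by linarith)]
        linarith
      calc (W:ℝ)*(W:ℝ) * (2/((4*(N:ℝ))+1)) ≤ (W:ℝ)*(W:ℝ) * (1/(2*(N:ℝ))) := by
            have hW2 : (0:ℝ) ≤ (W:ℝ)*(W:ℝ) := by positivity
            exact mul_le_mul_of_nonneg_left e1 hW2
        _ = (W:ℝ)*(W:ℝ) / (2*(N:ℝ)) := by ring
    have h2 : (N:ℝ) * ((W:ℝ)*(W:ℝ)/(2*(N:ℝ))) = (W:ℝ)*(W:ℝ)/2 := by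
      field_simp
    have h3 : (N:ℝ) * (K:ℝ) ≤ ((W:ℝ)-4)/4 * (W:ℝ) := by
      have hMN2 : (M:ℝ)*(N:ℝ)*(N:ℝ) = ((W:ℝ)-4)/4 := by rw [hWR]; ring
      nlinarith [hKR, hNR, hWpos, hMR, (by positivity : (0:ℝ) ≤ (K:ℝ))]
    have h4 : ((W:ℝ)-4)/4*(W:ℝ) = (W:ℝ)*(W:ℝ)/4 - (W:ℝ) := by ring
    have h5 : (N:ℝ) * ((W:ℝ)*(W:ℝ) * (2/((4*(N:ℝ))+1))) ≤ (W:ℝ)*(W:ℝ)/2 := by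
      calc (N:ℝ) * ((W:ℝ)*(W:ℝ) * (2/((4*(N:ℝ))+1))) ≤ (N:ℝ) * ((W:ℝ)*(W:ℝ)/(2*(N:ℝ))) :=
            mul_le_mul_of_nonneg_left h1 (by positivity)
        _ = (W:ℝ)*(W:ℝ)/2 := h2
    calc (Bad.card:ℝ) ≤ _ := hstep
      _ = (N:ℝ) * ((W:ℝ)*(W:ℝ) * (2/((4*(N:ℝ))+1))) + (N:ℝ)*(K:ℝ) := by ring
      _ < (W:ℝ)*(W:ℝ) := by linarith
  -- conclude
  have hTcard : W * W ≤ T.card := by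
    have h1 := SQF.card_ge_ap Y M r hM
    have h2 : Y / M = W * W := by rw [hYdef]; exact Nat.mul_div_cancel_left _ hM
    rw [h2] at h1
    exact h1
  have hlt : Bad.card < T.card := by
    have h6 : (Bad.card : ℝ) < (T.card : ℝ) :=
      lt_of_lt_of_le hsum_real (by exact_mod_cast hTcard)
    exact_mod_cast h6
  have hBadT : Bad ⊆ T := Finset.filter_subset _ _
  have hne : (T \ Bad).Nonempty := by
    rw [← Finset.card_pos, Finset.card_sdiff_of_subset hBadT]
    omega
  obtain ⟨y, hy⟩ := hne
  rw [Finset.mem_sdiff] at hy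
  obtain ⟨hyT, hyBad⟩ := hy
  refine ⟨y, (mem_filter.mp hyT).2, ?_⟩
  intro a ha q hq h1 h2 h3
  exact hyBad (mem_filter.mpr ⟨hyT, a, ha, q, hq, h1, h2, h3⟩)

lemma SQF.exists_good (N : ℕ) (hN : 0 < N) (hNp : ∀ q : ℕ, q.Prime → q ∣ N → q = 2)
    (B C : Finset ℕ) (hB : B ⊆ range N) (hBsq : ∀ a ∈ B, Squarefree a)
    (hC : C ⊆ range N) (hCpos : ∀ a ∈ C, 0 < a) (hdisj : ∀ a ∈ B, a ∉ C) :
    ∃ y : ℕ, (∀ a ∈ B, Squarefree (y * N + a)) ∧ (∀ a ∈ C, ¬ Squarefree (y * N + a)) := by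
  classical
  set H : ℕ := 4 * N with hH
  obtain ⟨f, hf, hfinj⟩ := SQF.exists_primes C H
  have hfprime : ∀ a ∈ C, (f a).Prime := fun a ha => (hf a ha).1
  have hfgt : ∀ a ∈ C, H < f a := fun a ha => (hf a ha).2
  have hfne2 : ∀ a ∈ C, ¬ (f a ∣ N) := by
    intro a ha hdvd
    have h2 := hNp (f a) (hfprime a ha) hdvd
    have := hfgt a ha
    omega
  have hfNcop : ∀ a ∈ C, Nat.Coprime N ((f a)^2) := by
    intro a ha
    exact (Nat.Coprime.pow_right _
      (((hfprime a ha).coprime_iff_not_dvd).mpr (hfne2 a ha)).symm)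
  -- residues t a with (f a)^2 ∣ t a * N + a
  have hres : ∀ a, a ∈ C → ∃ t : ℕ, (f a)^2 ∣ t * N + a := by
    intro a ha
    haveI : NeZero ((f a)^2) := ⟨pow_ne_zero _ (hfprime a ha).pos.ne'⟩
    set m := (f a)^2
    set x : ZMod m := (-(a : ZMod m)) * (N : ZMod m)⁻¹ with hx
    refine ⟨x.val, ?_⟩
    rw [← ZMod.natCast_eq_zero_iff]
    push_cast
    rw [ZMod.natCast_rightInverse x]
    have hinv : (N : ZMod m) * (N : ZMod m)⁻¹ = 1 :=
      ZMod.coe_mul_inv_eq_one N (hfNcop a ha)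
    calc x * N + a = (-(a : ZMod m)) * ((N : ZMod m) * (N : ZMod m)⁻¹) + a := by
          rw [hx]; ring
      _ = 0 := by rw [hinv]; ring
  choose t0 ht0 using hres
  set t : ℕ → ℕ := fun a => if ha : a ∈ C then t0 a ha else 0 with htdef
  have ht : ∀ a ∈ C, (f a)^2 ∣ t a * N + a := by
    intro a ha
    simp only [htdef, dif_pos ha]
    exact ht0 a ha
  -- CRT
  have hpair : (↑C : Set ℕ).Pairwise (Function.onFun Nat.Coprime fun a => (f a)^2) := by
    intro x hx y hy hxy
    have hne : f x ≠ f y := fun h => hxy (hfinj hx hy h)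
    exact ((Nat.coprime_primes (hfprime x hx) (hfprime y hy)).mpr hne).pow _ _
  obtain ⟨r₁, hr₁⟩ := Nat.chineseRemainderOfFinset t (fun a => (f a)^2) C
    (fun a ha => pow_ne_zero _ (hfprime a ha).pos.ne') hpair
  set M₀ : ℕ := ∏ q ∈ Nat.primesBelow (H+1), q^2 with hM₀
  set P : ℕ := ∏ a ∈ C, (f a)^2 with hP
  have hcopMP : Nat.Coprime M₀ P := by
    apply Nat.Coprime.prod_left
    intro q hq
    apply Nat.Coprime.prod_right
    intro b hb
    rw [Nat.mem_primesBelow] at hq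
    have hne : q ≠ f b := by
      have := hfgt b hb
      omega
    exact ((Nat.coprime_primes hq.2 (hfprime b hb)).mpr hne).pow _ _
  obtain ⟨r, hr0, hrP⟩ := Nat.chineseRemainder hcopMP 0 r₁
  set M : ℕ := M₀ * P with hMdef
  have hM₀pos : 0 < M₀ := Finset.prod_pos fun q hq =>
    pow_pos (Nat.mem_primesBelow.mp hq).2.pos _
  have hPpos : 0 < P := Finset.prod_pos fun a ha => pow_pos (hfprime a ha).pos _
  have hM : 0 < M := Nat.mul_pos hM₀pos hPpos
  have hHN : ∀ q : ℕ, q.Prime → H < q → ¬ q ∣ N := by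
    intro q hq hHq hdvd
    have := hNp q hq hdvd
    omega
  have hB' : ∀ a ∈ B, 0 < a ∧ a < N := by
    intro a ha
    exact ⟨Nat.pos_of_ne_zero (hBsq a ha).ne_zero, mem_range.mp (hB ha)⟩
  obtain ⟨y, hymod, hyavoid⟩ := SQF.exists_avoid N M r H hM hN hH B hB' hHN
  have hymodM : y ≡ r [MOD M] := hymod
  -- divisibility at C points
  have hyC : ∀ b ∈ C, (f b)^2 ∣ y * N + b := by
    intro b hb
    have hdvdP : (f b)^2 ∣ P := Finset.dvd_prod_of_mem _ hb
    have h1 : y ≡ r [MOD (f b)^2] :=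
      hymodM.of_dvd (dvd_mul_of_dvd_right hdvdP M₀)
    have h2 : r ≡ r₁ [MOD (f b)^2] := hrP.of_dvd hdvdP
    have h3 : r₁ ≡ t b [MOD (f b)^2] := hr₁ b hb
    have h4 : y ≡ t b [MOD (f b)^2] := (h1.trans h2).trans h3
    have h5 : y * N + b ≡ t b * N + b [MOD (f b)^2] := (h4.mul_right N).add_right b
    have h6 : t b * N + b ≡ 0 [MOD (f b)^2] := Nat.modEq_zero_iff_dvd.mpr (ht b hb)
    exact Nat.modEq_zero_iff_dvd.mp (h5.trans h6)
  refine ⟨y, ?_, ?_⟩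
  · -- squarefree at B points
    intro a ha
    rw [Nat.squarefree_iff_prime_squarefree]
    intro p hp hpdvd
    by_cases hpH : p ≤ H
    · -- small prime
      have hpmem : p ∈ Nat.primesBelow (H+1) := Nat.mem_primesBelow.mpr ⟨by omega, hp⟩
      have hdvdM₀ : p^2 ∣ M₀ := Finset.dvd_prod_of_mem _ hpmem
      have h1 : y ≡ r [MOD p^2] := hymodM.of_dvd (dvd_mul_of_dvd_left hdvdM₀ P)
      have h2 : r ≡ 0 [MOD p^2] := hr0.of_dvd hdvdM₀
      have h3 : p^2 ∣ y := Nat.modEq_zero_iff_dvd.mp (h1.trans h2)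
      have h4 : p * p ∣ y * N := by
        rw [← pow_two]
        exact Dvd.dvd.mul_right h3 N
      have h5 : p * p ∣ a := by
        have := Nat.dvd_sub hpdvd h4
        rwa [Nat.add_sub_cancel_left] at this
      exact (hp.one_lt.ne' : p ≠ 1) (Nat.isUnit_iff.mp (hBsq a ha p h5))
    · push_neg at hpH
      by_cases hpM : p ∣ M
      · -- p is one of the f b
        have hpp : Prime p := hp.prime
        rcases hpp.dvd_mul.mp (hMdef ▸ hpM) with hpM₀ | hpP
        · exfalso
          obtain ⟨q, hq, hpq⟩ := (hpp.dvd_finset_prod_iff _).mp hpM₀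
          rw [Nat.mem_primesBelow] at hq
          have : p = q := by
            have := hpp.dvd_of_dvd_pow (n := 2) hpq
            exact (Nat.prime_dvd_prime_iff_eq hp hq.2).mp this
          omega
        · obtain ⟨b, hb, hpb⟩ := (hpp.dvd_finset_prod_iff _).mp hpP
          have hpfb : p = f b := by
            have := hpp.dvd_of_dvd_pow (n := 2) hpb
            exact (Nat.prime_dvd_prime_iff_eq hp (hfprime b hb)).mp this
          have hd2 : p * p ∣ y * N + b := by
            rw [← pow_two, hpfb]
            exact hyC b hb
          have hab : a ≠ b := fun h => hdisj a ha (h ▸ hb)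
          have haN : a < N := mem_range.mp (hB ha)
          have hbN : b < N := mem_range.mp (hC hb)
          have hppN : N < p * p := by
            have h1 : 4 * N < p := by omega
            nlinarith
          rcases Nat.lt_or_ge a b with hlt | hge
          · have hd3 : p * p ∣ b - a := by
              have := Nat.dvd_sub hd2 hpdvd
              rwa [show y * N + b - (y * N + a) = b - a by omega] at this
            have := Nat.le_of_dvd (by omega) hd3
            omega
          · have hlt : b < a := by omega
            have hd3 : p * p ∣ a - b := by
              have := Nat.dvd_sub hpdvd hd2
              rwa [show y * N + a - (y * N + b) = a - b by omega] at this
            have := Nat.le_of_dvd (by omega) hd3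
            omega
      · exact hyavoid a ha p hp hpH hpM hpdvd
  · -- non-squarefree at C points
    intro b hb hsq
    have := hsq (f b) (by rw [← pow_two]; exact hyC b hb)
    exact (hfprime b hb).one_lt.ne' (Nat.isUnit_iff.mp this)

/-- For every `ε > 0` and all sufficiently large `n`, the number of distinct
profiles `{a < 2^n : y·2^n + a squarefree}` as `y` ranges over ℕ is at least
`2^((6/π² − ε)·2^n)`. -/
theorem squarefree_query_table_lower_bound :
    ∀ ε : ℝ, 0 < ε →
      ∃ n₀ : ℕ, ∀ n : ℕ, n₀ ≤ n →
        (2 : ℝ) ^ ((6 / Real.pi ^ 2 - ε) * 2 ^ n) ≤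
          ({A : Finset ℕ | ∃ y : ℕ,
              A = (Finset.range (2 ^ n)).filter
                (fun a => Squarefree (y * 2 ^ n + a))} : Set (Finset ℕ)).ncard := by
  classical
  intro ε hε
  obtain ⟨N₀, hN₀⟩ := SQF.sqf_count ε hε
  refine ⟨N₀ + 1, fun n hn => ?_⟩
  set N : ℕ := 2 ^ n with hNdef
  have hN1 : 1 ≤ N := Nat.one_le_two_pow
  have hNge : N₀ ≤ N := by
    have h1 : n < 2 ^ n := Nat.lt_two_pow_self
    omega
  have hNpos : 0 < N := hN1
  have hNp : ∀ q : ℕ, q.Prime → q ∣ N → q = 2 := by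
    intro q hq hdvd
    have h1 : q ∣ 2 := hq.dvd_of_dvd_pow (hNdef ▸ hdvd)
    exact (Nat.prime_dvd_prime_iff_eq hq Nat.prime_two).mp h1
  set S₀ : Finset ℕ := (range N).filter Squarefree with hS₀
  set Q : ℕ := S₀.card with hQdef
  have hQ : (6 / Real.pi ^ 2 - ε) * (N : ℝ) ≤ (Q : ℝ) := hN₀ N hNge hN1
  -- realization of all subsets of S₀
  have hexists : ∀ B : Finset ℕ, ∃ y : ℕ, B ⊆ S₀ →
      ((range N).filter (fun a => Squarefree (y * N + a))) ∩ S₀ = B := by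
    intro B
    by_cases hBsub : B ⊆ S₀
    · have hBsq : ∀ a ∈ B, Squarefree a := fun a ha => (mem_filter.mp (hBsub ha)).2
      obtain ⟨y, hy1, hy2⟩ := SQF.exists_good N hNpos hNp B (S₀ \ B)
        (hBsub.trans (filter_subset _ _)) hBsq
        ((sdiff_subset).trans (filter_subset _ _))
        (fun a ha => Nat.pos_of_ne_zero (mem_filter.mp (sdiff_subset ha)).2.ne_zero)
        (fun a ha hmem => (Finset.mem_sdiff.mp hmem).2 ha)
      refine ⟨y, fun _ => ?_⟩
      ext a
      simp only [Finset.mem_inter, mem_filter, mem_range]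
      constructor
      · rintro ⟨⟨haN, hsq⟩, haS⟩
        by_contra haB
        exact hy2 a (Finset.mem_sdiff.mpr ⟨haS, haB⟩) hsq
      · intro haB
        have haS := hBsub haB
        have haS' := mem_filter.mp haS
        exact ⟨⟨mem_range.mp haS'.1, hy1 a haB⟩, haS⟩
    · exact ⟨0, fun h => absurd h hBsub⟩
  choose yf hyf using hexists
  set G : Finset ℕ → Finset ℕ :=
    fun B => (range N).filter (fun a => Squarefree (yf B * N + a)) with hG
  have hGinj : Set.InjOn G ↑(S₀.powerset) := by
    intro B1 h1 B2 h2 heq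
    have h1' : B1 ⊆ S₀ := Finset.mem_powerset.mp (Finset.mem_coe.mp h1)
    have h2' : B2 ⊆ S₀ := Finset.mem_powerset.mp (Finset.mem_coe.mp h2)
    have e1 := hyf B1 h1'
    have e2 := hyf B2 h2'
    rw [← e1, ← e2]
    simp only [hG] at heq
    rw [heq]
  set Im : Finset (Finset ℕ) := (S₀.powerset).image G with hIm
  have hImcard : Im.card = 2 ^ Q := by
    rw [hIm, Finset.card_image_of_injOn hGinj, Finset.card_powerset]
  set SetS : Set (Finset ℕ) := {A : Finset ℕ | ∃ y : ℕ,
      A = (Finset.range (2 ^ n)).filter (fun a => Squarefree (y * 2 ^ n + a))} with hSetS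
  have hsub : ↑Im ⊆ SetS := by
    intro A hA
    rw [hIm] at hA
    simp only [Finset.coe_image, Set.mem_image, Finset.mem_coe] at hA
    obtain ⟨B, _, rfl⟩ := hA
    exact ⟨yf B, rfl⟩
  have hfin : SetS.Finite := by
    apply Set.Finite.subset (Finset.finite_toSet ((range N).powerset))
    intro A hA
    obtain ⟨y, rfl⟩ := hA
    simp only [Finset.coe_powerset, Set.mem_preimage, Set.mem_powerset_iff]
    exact_mod_cast Finset.filter_subset _ _
  have hncard : 2 ^ Q ≤ SetS.ncard := by
    calc 2 ^ Q = Im.card := hImcard.symm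
      _ = (↑Im : Set (Finset ℕ)).ncard := (Set.ncard_coe_finset Im).symm
      _ ≤ SetS.ncard := Set.ncard_le_ncard hsub hfin
  -- final real inequality
  have h2 : (2 : ℝ) ^ ((6 / Real.pi ^ 2 - ε) * 2 ^ n) ≤ (2 : ℝ) ^ (Q : ℝ) := by
    apply Real.rpow_le_rpow_of_exponent_le (by norm_num)
    calc (6 / Real.pi ^ 2 - ε) * 2 ^ n = (6 / Real.pi ^ 2 - ε) * (N : ℝ) := by
          rw [hNdef]; push_cast; ring
      _ ≤ (Q : ℝ) := hQ
  calc (2 : ℝ) ^ ((6 / Real.pi ^ 2 - ε) * 2 ^ n) ≤ (2 : ℝ) ^ (Q : ℝ) := h2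
    _ = ((2 ^ Q : ℕ) : ℝ) := by rw [Real.rpow_natCast]; push_cast; ring
    _ ≤ (SetS.ncard : ℝ) := by exact_mod_cast hncard
end

section
/- Let N ≥ 1 and ℓ ≥ 2N be natural numbers, let p₁ < p₂ < … denote the primes in increasing order, let q' = ∏_{i=1}^{ℓ} pᵢ², let T be a subset of {0, 1, …, N − 1}, and let y₀ be a natural number such that for every a ∈ T and every i ≤ ℓ, pᵢ² does not divide y₀ + a. Then there exists a natural number z such that z·q' + y₀ + a is squarefree for every a ∈ T. -/
open Finset

private lemma nth_prime_ge (j : ℕ) : j + 2 ≤ Nat.nth Nat.Prime j := by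
  induction j with
  | zero => exact (Nat.prime_nth_prime 0).two_le
  | succ n ih =>
    have h : Nat.nth Nat.Prime n < Nat.nth Nat.Prime (n + 1) :=
      (Nat.nth_lt_nth Nat.infinite_setOf_prime).2 (Nat.lt_succ_self n)
    omega

private lemma anti_aux (f : ℕ → ℕ) (a : ℕ) (hf : ∀ i, a ≤ i → f (i + 1) ≤ f i) :
    ∀ b, a ≤ b → f b ≤ f a := by
  intro b
  induction b with
  | zero => intro h; simp [Nat.le_zero.mp h]
  | succ n ih =>
    intro h
    rcases Nat.lt_or_ge a (n + 1) with h' | h'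
    · exact le_trans (hf n (by omega)) (ih (by omega))
    · have : a = n + 1 := by omega
      simp [this]

private lemma telescope_sum (f : ℕ → ℕ) (a : ℕ) (hf : ∀ i, a ≤ i → f (i + 1) ≤ f i) :
    ∀ b, a ≤ b → ∑ j ∈ Finset.Ico a b, (f j - f (j + 1)) ≤ f a - f b := by
  intro b
  induction b with
  | zero => intro h; simp [Nat.le_zero.mp h]
  | succ n ih =>
    intro h
    rcases Nat.lt_or_ge a (n + 1) with h' | h'
    · have ha : a ≤ n := by omega
      rw [Finset.sum_Ico_succ_top ha]
      have h1 := ih ha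
      have h3 := hf n ha
      have h2 := anti_aux f a hf n ha
      omega
    · have : a = n + 1 := by omega
      simp [this]

set_option maxHeartbeats 1000000 in
/-- Let `N ≥ 1`, `ℓ ≥ 2N`, let `pᵢ` be the `i`-th prime, `q' = ∏_{i=1}^{ℓ} pᵢ²`,
and let `T ⊆ {0,…,N−1}`. If `y₀` is such that for all `a ∈ T` and `i ≤ ℓ` the
square `pᵢ²` does not divide `y₀ + a`, then there exists `z` such that
`z·q' + y₀ + a` is squarefree for every `a ∈ T`. -/
theorem exists_shift_squarefree
    (N ℓ : ℕ) (hN : 1 ≤ N) (hℓ : 2 * N ≤ ℓ)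
    (q' : ℕ) (hq' : q' = ∏ i ∈ Finset.range ℓ, (Nat.nth Nat.Prime i) ^ 2)
    (T : Finset ℕ) (hT : T ⊆ Finset.range N)
    (y₀ : ℕ)
    (hy₀ : ∀ a ∈ T, ∀ i < ℓ, ¬ (Nat.nth Nat.Prime i) ^ 2 ∣ (y₀ + a)) :
    ∃ z : ℕ, ∀ a ∈ T, Squarefree (z * q' + y₀ + a) := by
  classical
  set P : ℕ → ℕ := Nat.nth Nat.Prime with hP
  set C : ℕ := q' + y₀ + N + 1 with hCdef
  have hC : 1 ≤ C := by omega
  set Z : ℕ := 2 * N * (8 * N * C ^ 2) with hZdef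
  have hZ1 : 1 ≤ Z := by
    rw [hZdef]
    exact Nat.mul_pos (by omega) (Nat.mul_pos (by omega) (pow_pos (by omega : 0 < C) 2))
  set M : ℕ := Z * q' + y₀ + N with hMdef
  set K : ℕ := Nat.sqrt M with hKdef
  -- the bad set
  set B : Finset ℕ :=
    (Finset.range Z).filter (fun z => ∃ a ∈ T, ¬ Squarefree (z * q' + y₀ + a)) with hBdef
  -- per (a, j) bad sets
  set S : ℕ → ℕ → Finset ℕ :=
    (fun a j => (Finset.range Z).filter (fun z => (P j) ^ 2 ∣ z * q' + (y₀ + a))) with hSdef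
  have hq'pos : 0 < q' := by
    rw [hq']
    exact Finset.prod_pos (fun i _ => pow_pos (Nat.prime_nth_prime i).pos 2)
  have hℓpos : 0 < ℓ := by omega
  -- coprimality of large prime squares with q'
  have hcop : ∀ j, ℓ ≤ j → Nat.Coprime ((P j) ^ 2) q' := by
    intro j hj
    have hp : Nat.Prime (P j) := Nat.prime_nth_prime j
    have hndvd : ¬ P j ∣ q' := by
      intro hdvd
      rw [hq'] at hdvd
      obtain ⟨i, hi, hdvd'⟩ := hp.prime.exists_mem_finset_dvd hdvd
      have : P j ∣ P i := hp.dvd_of_dvd_pow hdvd'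
      have heq : P j = P i := ((Nat.prime_nth_prime i).eq_one_or_self_of_dvd _ this).resolve_left
        hp.one_lt.ne'
      have : j = i := Nat.nth_injective Nat.infinite_setOf_prime heq
      rw [Finset.mem_range] at hi
      omega
    exact Nat.Coprime.pow_left 2 ((Nat.Prime.coprime_iff_not_dvd hp).mpr hndvd)
  -- y₀ + a is positive for a ∈ T
  have hya : ∀ a ∈ T, 0 < y₀ + a := by
    intro a ha
    by_contra h
    push_neg at h
    have h0 : y₀ + a = 0 := by omega
    exact hy₀ a ha 0 hℓpos (by rw [h0]; exact dvd_zero _)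
  -- covering of the bad set
  have hcover : B ⊆ T.biUnion (fun a => (Finset.Ico ℓ K).biUnion (fun j => S a j)) := by
    intro z hz
    rw [hBdef, Finset.mem_filter] at hz
    obtain ⟨hzZ, a, ha, hnsq⟩ := hz
    rw [Finset.mem_range] at hzZ
    set n : ℕ := z * q' + y₀ + a with hn
    have hnpos : 0 < n := by have := hya a ha; omega
    rw [Nat.squarefree_iff_prime_squarefree] at hnsq
    push_neg at hnsq
    obtain ⟨p, hp, hpd⟩ := hnsq
    set j : ℕ := Nat.count Nat.Prime p with hj
    have hpj : P j = p := Nat.nth_count hp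
    have hpd2 : (P j) ^ 2 ∣ n := by rw [hpj, sq]; exact hpd
    have hjℓ : ℓ ≤ j := by
      by_contra hc
      push_neg at hc
      have hq'd : (P j) ^ 2 ∣ q' := by
        rw [hq']
        exact Finset.dvd_prod_of_mem _ (Finset.mem_range.mpr hc)
      have hdy : (P j) ^ 2 ∣ y₀ + a := by
        have h1 : (P j) ^ 2 ∣ z * q' := Dvd.dvd.mul_left hq'd z
        have h2 : n = z * q' + (y₀ + a) := by rw [hn]; ring
        rw [h2] at hpd2
        exact (Nat.dvd_add_right h1).mp hpd2
      exact hy₀ a ha j hc hdy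
    have hjK : j < K := by
      have h1 : (P j) ^ 2 ≤ n := Nat.le_of_dvd hnpos hpd2
      have haN : a < N := Finset.mem_range.mp (hT ha)
      have h2 : n ≤ M := by
        rw [hn, hMdef]
        have : z * q' ≤ Z * q' := Nat.mul_le_mul_right _ (by omega)
        omega
      have h3 : j + 2 ≤ P j := nth_prime_ge j
      have h4 : (j + 1) * (j + 1) ≤ M := by
        have : (j + 1) * (j + 1) ≤ (P j) ^ 2 := by nlinarith
        omega
      have h5 := Nat.le_sqrt.mpr h4
      omega
    refine Finset.mem_biUnion.mpr ⟨a, ha, Finset.mem_biUnion.mpr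
      ⟨j, Finset.mem_Ico.mpr ⟨hjℓ, hjK⟩, ?_⟩⟩
    rw [hSdef]
    refine Finset.mem_filter.mpr ⟨Finset.mem_range.mpr hzZ, ?_⟩
    have heqn : n = z * q' + (y₀ + a) := by rw [hn]; ring
    rw [← heqn]
    exact hpd2
  -- cardinality bound for each S a j
  have hScard : ∀ a, ∀ j, ℓ ≤ j → (S a j).card ≤ Z / (P j) ^ 2 + 1 := by
    intro a j hj
    have hppos : 0 < (P j) ^ 2 := pow_pos (Nat.prime_nth_prime j).pos 2
    have key : ∀ w1 w2 : ℕ, w1 ≤ w2 → (P j) ^ 2 ∣ w1 * q' + (y₀ + a) →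
        (P j) ^ 2 ∣ w2 * q' + (y₀ + a) →
        w1 / (P j) ^ 2 = w2 / (P j) ^ 2 → w1 = w2 := by
      intro w1 w2 hle hd1 hd2 hq
      have hdiff : (P j) ^ 2 ∣ (w2 - w1) * q' := by
        have hsub := Nat.dvd_sub hd2 hd1
        have heq2 : (w2 * q' + (y₀ + a)) - (w1 * q' + (y₀ + a)) = (w2 - w1) * q' := by
          rw [Nat.sub_mul]
          exact Nat.add_sub_add_right _ _ _
        rwa [heq2] at hsub
      have hdvd : (P j) ^ 2 ∣ w2 - w1 := (hcop j hj).dvd_of_dvd_mul_right hdiff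
      obtain ⟨k, hk⟩ := hdvd
      have hw2 : w2 = w1 + (P j) ^ 2 * k := by omega
      rw [hw2, Nat.add_mul_div_left _ _ hppos] at hq
      have hk0 : k = 0 := by omega
      subst hk0
      simp at hw2
      omega
    have hinj : Set.InjOn (fun z => z / (P j) ^ 2) (S a j) := by
      intro z1 hz1 z2 hz2 heq
      simp only [hSdef, Finset.coe_filter, Set.mem_setOf_eq, Finset.mem_range] at hz1 hz2
      rcases le_total z1 z2 with h | h
      · exact key z1 z2 h hz1.2 hz2.2 heq
      · exact (key z2 z1 h hz2.2 hz1.2 heq.symm).symm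
    calc (S a j).card ≤ (Finset.range (Z / (P j) ^ 2 + 1)).card := by
          apply Finset.card_le_card_of_injOn _ _ hinj
          intro z hz
          simp only [hSdef, Finset.mem_coe, Finset.mem_filter, Finset.mem_range] at hz
          simp only [Finset.mem_coe, Finset.mem_range]
          have hd : z / (P j) ^ 2 ≤ Z / (P j) ^ 2 := Nat.div_le_div_right (Nat.le_of_lt hz.1)
          omega
      _ = Z / (P j) ^ 2 + 1 := Finset.card_range _
  -- inner sum bound
  have hinner : ∀ a : ℕ, ∑ j ∈ Finset.Ico ℓ K, (S a j).card ≤ Z / (2 * N) + K := by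
    intro a
    have h2 : ∑ j ∈ Finset.Ico ℓ K, (S a j).card ≤ ∑ j ∈ Finset.Ico ℓ K, (Z / (P j) ^ 2 + 1) :=
      Finset.sum_le_sum (fun j hj => hScard a j (Finset.mem_Ico.mp hj).1)
    rcases lt_or_ge K ℓ with hlK | hlK
    · rw [Finset.Ico_eq_empty (by omega : ¬ ℓ < K)]
      simp
    · have h3 : ∑ j ∈ Finset.Ico ℓ K, (Z / (P j) ^ 2 + 1)
          = (∑ j ∈ Finset.Ico ℓ K, Z / (P j) ^ 2) + (K - ℓ) := by
        rw [Finset.sum_add_distrib]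
        simp [Nat.card_Ico]
      have h4 : ∑ j ∈ Finset.Ico ℓ K, Z / (P j) ^ 2
          ≤ ∑ j ∈ Finset.Ico ℓ K, (Z / j - Z / (j + 1)) := by
        refine Finset.sum_le_sum ?_
        intro j hj
        obtain ⟨hj1, _⟩ := Finset.mem_Ico.mp hj
        have hj2 : 2 ≤ j := by omega
        have hple : j * (j + 1) ≤ (P j) ^ 2 := by
          have := nth_prime_ge j
          nlinarith
        have e1 : Z / (P j) ^ 2 ≤ Z / (j * (j + 1)) :=
          Nat.div_le_div_left hple (by positivity)
        refine le_trans e1 ?_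
        have e2 : Z / (j * (j + 1)) = (Z / (j + 1)) / j := by
          rw [Nat.div_div_eq_div_mul, Nat.mul_comm]
        rw [e2]
        set q := Z / (j + 1) with hqd
        have e3 : q / j + q ≤ Z / j := by
          rw [Nat.le_div_iff_mul_le (by omega : 0 < j)]
          have e4 : (q / j) * j ≤ q := Nat.div_mul_le_self q j
          have e5 : q * (j + 1) ≤ Z := Nat.div_mul_le_self Z (j + 1)
          nlinarith
        omega
      have h5 : ∑ j ∈ Finset.Ico ℓ K, (Z / j - Z / (j + 1)) ≤ Z / ℓ - Z / K :=
        telescope_sum (fun j => Z / j) ℓ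
          (fun i hi => Nat.div_le_div_left (by omega) (by omega)) K hlK
      have h6 : Z / ℓ ≤ Z / (2 * N) := Nat.div_le_div_left hℓ (by omega)
      calc ∑ j ∈ Finset.Ico ℓ K, (S a j).card
          ≤ ∑ j ∈ Finset.Ico ℓ K, (Z / (P j) ^ 2 + 1) := h2
        _ = (∑ j ∈ Finset.Ico ℓ K, Z / (P j) ^ 2) + (K - ℓ) := h3
        _ ≤ (Z / ℓ - Z / K) + (K - ℓ) := add_le_add (le_trans h4 h5) le_rfl
        _ ≤ Z / (2 * N) + K :=
            add_le_add (le_trans (Nat.sub_le _ _) h6) (Nat.sub_le _ _)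
  -- total count
  have hBcard : B.card < Z := by
    have h1 : B.card ≤ ∑ a ∈ T, ∑ j ∈ Finset.Ico ℓ K, (S a j).card := by
      refine le_trans (Finset.card_le_card hcover) ?_
      refine le_trans Finset.card_biUnion_le (Finset.sum_le_sum ?_)
      intro a _
      exact Finset.card_biUnion_le
    have hTcard : T.card ≤ N := le_trans (Finset.card_le_card hT) (by simp)
    have hZ2N : Z / (2 * N) = 8 * N * C ^ 2 := by
      rw [hZdef]
      exact Nat.mul_div_cancel_left _ (by omega)
    have hKle : K ≤ 4 * N * C ^ 2 := by
      have hMZC : M ≤ Z * C := by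
        have s1 : y₀ + N ≤ Z * (y₀ + N + 1) := by nlinarith
        have s2 : Z * q' + Z * (y₀ + N + 1) = Z * C := by rw [hCdef]; ring
        rw [hMdef]
        omega
      have hZC : Z * C ≤ (4 * N * C ^ 2) ^ 2 := by
        have t1 : Z * C = 16 * N ^ 2 * C ^ 3 := by rw [hZdef]; ring
        have t2 : (4 * N * C ^ 2) ^ 2 = 16 * N ^ 2 * C ^ 4 := by ring
        rw [t1, t2]
        exact Nat.mul_le_mul le_rfl (Nat.pow_le_pow_right (by omega) (by omega))
      calc K = Nat.sqrt M := rfl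
        _ ≤ Nat.sqrt ((4 * N * C ^ 2) ^ 2) := Nat.sqrt_le_sqrt (le_trans hMZC hZC)
        _ = 4 * N * C ^ 2 := Nat.sqrt_eq' _
    calc B.card ≤ ∑ a ∈ T, (Z / (2 * N) + K) :=
          le_trans h1 (Finset.sum_le_sum (fun a _ => hinner a))
      _ = T.card * (Z / (2 * N) + K) := by rw [Finset.sum_const, smul_eq_mul]
      _ ≤ N * (8 * N * C ^ 2 + 4 * N * C ^ 2) := by
          rw [hZ2N]
          exact Nat.mul_le_mul hTcard (by omega)
      _ < Z := by
          rw [hZdef]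
          have hpos : 0 < N * (N * C ^ 2) :=
            Nat.mul_pos (by omega) (Nat.mul_pos (by omega) (pow_pos (by omega : 0 < C) 2))
          have e1 : N * (8 * N * C ^ 2 + 4 * N * C ^ 2) = 12 * (N * (N * C ^ 2)) := by ring
          have e2 : 2 * N * (8 * N * C ^ 2) = 16 * (N * (N * C ^ 2)) := by ring
          omega
  -- extract a good z
  have hex : ∃ z ∈ Finset.range Z, z ∉ B := by
    by_contra h
    push_neg at h
    have hcc : (Finset.range Z).card ≤ B.card := Finset.card_le_card h
    rw [Finset.card_range] at hcc
    omega
  obtain ⟨z, hzZ, hzB⟩ := hex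
  refine ⟨z, ?_⟩
  intro a ha
  by_contra hns
  exact hzB (Finset.mem_filter.mpr ⟨hzZ, a, ha, hns⟩)
end
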